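/- arXiv:0904.0156 — 5 statements merged into one kernel-verified Lean document; each statement's English description precedes it below -/
import Mathlib

section
/- Let Θ be a measurable subset of ℝ, let p(x|θ) ≥ 0 be jointly measurable densities in x for each θ, and let π : Θ → (0,∞) be continuous with 0 < ∫_Θ p(x|θ)π(θ)dθ < ∞ for every x. Let {Θ_i} be an increasing sequence of compact subsets of Θ with ∪_i Θ_i = Θ and ∫_{Θ_1} p(x|θ)π(θ)dθ > 0. Define the formal posterior π(θ|x) = p(x|θ)π(θ)/∫_Θ p(x|θ')π(θ')dθ' and the restricted posteriors π_i(θ|x) = p(x|θ)π(θ)1_{Θ_i}(θ)/∫_{Θ_i} p(x|θ')π(θ')dθ'. Then for every x, the logarithmic divergence ∫_{Θ_i} π_i(θ|x) log(π_i(θ|x)/π(θ|x)) dθ converges to 0 as i → ∞. -/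
open MeasureTheory Filter

/-!
The restricted posterior is the formal posterior rescaled by the ratio `Z / Zᵢ` of the two
normalizing constants, so its logarithmic divergence from the formal posterior is exactly
`log (Z / Zᵢ)`. By monotone convergence of set integrals `Zᵢ → Z > 0`, hence this tends to `0`.
-/

lemma div_mul_log_div_div_div (a b c : ℝ) :
    a / b * Real.log (a / b / (a / c)) = a / b * Real.log (c / b) := by
  rcases eq_or_ne a 0 with rfl | ha
  · simp
  · rw [div_div_div_comm, div_self ha, one_div_div]

/-- For `Zₛ = ∫ f ∂μ = 0` both sides vanish, as `f / 0 = 0` and `log 0 = 0`. -/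
lemma integral_div_mul_log_div_div_div {α : Type*} [MeasurableSpace α] (μ : Measure α)
    (f : α → ℝ) (c : ℝ) :
    ∫ x, f x / (∫ y, f y ∂μ) * Real.log (f x / (∫ y, f y ∂μ) / (f x / c)) ∂μ
      = Real.log (c / ∫ y, f y ∂μ) := by
  simp_rw [div_mul_log_div_div_div, integral_mul_const, integral_div]
  rcases eq_or_ne (∫ y, f y ∂μ) 0 with h | h
  · simp [h]
  · rw [div_self h, one_mul]

theorem stmt_0_general
    {X : Type*} [MeasurableSpace X]
    (Θ : Set ℝ)
    (p : X → ℝ → ℝ)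
    (pri : ℝ → ℝ)
    (hpos : ∀ x, 0 < ∫ θ in Θ, p x θ * pri θ)
    (hfin : ∀ x, IntegrableOn (fun θ => p x θ * pri θ) Θ)
    (Θi : ℕ → Set ℝ)
    (hmono : Monotone Θi)
    (hcpt : ∀ i, IsCompact (Θi i))
    (hcover : (⋃ i, Θi i) = Θ) :
    ∀ x, Tendsto
      (fun i =>
        ∫ θ in Θi i,
          (p x θ * pri θ / (∫ θ' in Θi i, p x θ' * pri θ')) *
            Real.log
              ((p x θ * pri θ / (∫ θ' in Θi i, p x θ' * pri θ')) /
                (p x θ * pri θ / (∫ θ' in Θ, p x θ' * pri θ'))))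
      atTop (nhds 0) := by
  intro x
  have hZ : (∫ θ in Θ, p x θ * pri θ) ≠ 0 := (hpos x).ne'
  have hZi : Tendsto (fun i => ∫ θ in Θi i, p x θ * pri θ) atTop
      (nhds (∫ θ in Θ, p x θ * pri θ)) := by
    subst hcover
    exact tendsto_setIntegral_of_monotone (fun i => (hcpt i).measurableSet) hmono (hfin x)
  simp_rw [integral_div_mul_log_div_div_div]
  simpa [div_self hZ] using (tendsto_const_nhds.div hZi hZ).log (div_ne_zero hZ hZ)

/-- For a formal posterior from a (possibly improper) strictly
positive continuous prior, the posteriors restricted to an approximating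
compact sequence converge logarithmically to the formal posterior. -/
theorem stmt_0
    {X : Type*} [MeasurableSpace X]
    (Θ : Set ℝ) (hΘ : MeasurableSet Θ)
    (p : X → ℝ → ℝ)
    (hp_meas : Measurable (Function.uncurry p))
    (hp_nonneg : ∀ x θ, 0 ≤ p x θ)
    (pri : ℝ → ℝ) (hpri_cont : ContinuousOn pri Θ) (hpri_pos : ∀ θ ∈ Θ, 0 < pri θ)
    (hpos : ∀ x, 0 < ∫ θ in Θ, p x θ * pri θ)
    (hfin : ∀ x, IntegrableOn (fun θ => p x θ * pri θ) Θ)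
    (Θi : ℕ → Set ℝ)
    (hmono : Monotone Θi)
    (hcpt : ∀ i, IsCompact (Θi i))
    (hsub : ∀ i, Θi i ⊆ Θ)
    (hcover : (⋃ i, Θi i) = Θ)
    (hpos0 : ∀ x, 0 < ∫ θ in Θi 0, p x θ * pri θ) :
    ∀ x, Tendsto
      (fun i =>
        ∫ θ in Θi i,
          (p x θ * pri θ / (∫ θ' in Θi i, p x θ' * pri θ')) *
            Real.log
              ((p x θ * pri θ / (∫ θ' in Θi i, p x θ' * pri θ')) /
                (p x θ * pri θ / (∫ θ' in Θ, p x θ' * pri θ'))))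
      atTop (nhds 0) :=
  stmt_0_general Θ p pri hpos hfin Θi hmono hcpt hcover
end

section
/- Let f be a probability density on ℝ and F(x) = ∫_{−∞}^x f(t)dt its distribution function. Assume that for some ε > 0, |t|^{1+ε} f(t) → 0 as |t| → ∞. For the location model p(x|θ) = f(x−θ) (θ ∈ ℝ) with prior π(θ) = 1, restricted priors π_i(θ) = (2i)^{-1} 1_{[−i,i]}(θ) and prior-predictive densities p_i(x) = (2i)^{-1}(F(x+i) − F(x−i)), the expected logarithmic discrepancy between the formal posterior π(θ|x) = f(x−θ) and the restricted posteriors π_i(θ|x) equals −(1/(2i)) ∫_ℝ (F(x+i) − F(x−i)) log(F(x+i) − F(x−i)) dx (with 0·log 0 := 0), and this quantity converges to 0 as i → ∞. Consequently π(θ) = 1 is a permissible prior for this location model. -/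
/-!
The substitution `x = i * y` turns `(1/(2i)) ∫ G log G`, with `G x = F (x + i) - F (x - i)`, into
`(1/2) ∫ H log H` with `H y = F (i*y + i) - F (i*y - i)`. For `|y| ≠ 1`, `H` tends to `1` or to `0`,
so `H log H → 0`. Dominated convergence applies: the tail bound `f t ≤ |t|^{-(1+ε)}` gives
`H y ≤ 2 ((1 + |y|)/3)^{-(1+ε)}` uniformly in `i` once `|y| ≥ 2`, and `|u log u| ≤ u^a/(1-a)` with
`(1+ε) a > 1` turns this into an integrable majorant. The identity is pointwise in `x`: on `[-i, i]`
the ratio of the restricted to the formal posterior is `1 / G x`.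
-/

open MeasureTheory Filter Real Set Topology

lemma abs_mul_log_le_one {u : ℝ} (h0 : 0 ≤ u) (h1 : u ≤ 1) : |u * log u| ≤ 1 := by
  rcases h0.eq_or_lt with rfl | hpos
  · simp
  · rw [mul_comm]
    exact (abs_log_mul_self_lt u hpos h1).le

lemma abs_mul_log_le_rpow_div {u a : ℝ} (h0 : 0 ≤ u) (h1 : u ≤ 1) (ha : a < 1) :
    |u * log u| ≤ u ^ a / (1 - a) := by
  rcases h0.eq_or_lt with rfl | hpos
  · simp only [zero_mul, abs_zero]
    exact div_nonneg (rpow_nonneg le_rfl a) (sub_nonneg.2 ha.le)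
  · calc |u * log u| = u * log u⁻¹ := by
          rw [abs_of_nonpos (mul_log_nonpos h0 h1), log_inv, mul_neg]
      _ ≤ u * ((u⁻¹) ^ (1 - a) / (1 - a)) :=
          mul_le_mul_of_nonneg_left (log_le_rpow_div (inv_nonneg.2 h0) (sub_pos.2 ha)) h0
      _ = u ^ a / (1 - a) := by
          rw [inv_rpow h0, ← rpow_neg h0, mul_div_assoc', mul_comm, ← rpow_add_one hpos.ne']
          congr 2
          ring

-- Holds for all `a`, `G` thanks to `x / 0 = 0` and `log 0 = 0`.
lemma div_mul_log_div_div_self (a G : ℝ) : a / G * log (a / G / a) = -log G / G * a := by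
  rcases eq_or_ne a 0 with rfl | ha
  · simp
  · rw [div_right_comm, div_self ha, one_div, log_inv]
    ring

lemma exists_le_rpow_neg_of_tendsto_cocompact {g : ℝ → ℝ} {p : ℝ}
    (h : Tendsto (fun t => |t| ^ p * g t) (cocompact ℝ) (𝓝 0)) :
    ∃ M, ∀ t, M ≤ |t| → g t ≤ |t| ^ (-p) := by
  have hev := h.eventually (eventually_lt_nhds one_pos)
  rw [← Metric.cobounded_eq_cocompact, ← comap_norm_atTop, eventually_comap,
    eventually_atTop] at hev
  obtain ⟨M, hM⟩ := hev
  refine ⟨max M 1, fun t ht => ?_⟩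
  have ht0 : 0 < |t| := one_pos.trans_le ((le_max_right _ _).trans ht)
  have hlt := hM |t| ((le_max_left _ _).trans ht) t rfl
  rw [rpow_neg ht0.le, ← one_div]
  exact (lt_div_iff₀' (rpow_pos_of_pos ht0 p)).2 hlt |>.le

lemma integrable_one_add_abs_div_rpow_neg {p c : ℝ} (hp : 1 < p) (hc : 0 ≤ c) :
    Integrable fun y : ℝ => ((1 + |y|) / c) ^ (-p) := by
  have h := (integrable_one_add_norm (E := ℝ) (μ := volume) (r := p) (by simpa using hp)).div_const
    (c ^ (-p))
  refine h.congr (Eventually.of_forall fun y => ?_)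
  simp only [Real.norm_eq_abs]
  rw [div_rpow (by positivity) hc]

lemma tendsto_comp_natCast_mul {g : ℝ → ℝ} (htop : Tendsto g atTop (𝓝 1))
    (hbot : Tendsto g atBot (𝓝 0)) {c : ℝ} (hc : c ≠ 0) :
    Tendsto (fun n : ℕ => g (n * c)) atTop (𝓝 (if 0 < c then 1 else 0)) := by
  rcases hc.lt_or_gt with hc | hc
  · rw [if_neg hc.not_gt]
    exact hbot.comp (tendsto_natCast_atTop_atTop.atTop_mul_const_of_neg hc)
  · rw [if_pos hc]
    exact htop.comp (tendsto_natCast_atTop_atTop.atTop_mul_const hc)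

variable {f F : ℝ → ℝ}

lemma tendsto_setIntegral_Iic_atTop (hf : Integrable f) :
    Tendsto (fun x => ∫ t in Iic x, f t) atTop (𝓝 (∫ t, f t)) := by
  have h := tendsto_setIntegral_of_monotone (fun x : ℝ => measurableSet_Iic)
    (fun _ _ h => Iic_subset_Iic.2 h) hf.integrableOn
  rwa [iUnion_Iic, Measure.restrict_univ] at h

lemma tendsto_setIntegral_Iic_atBot (hf : Integrable f) :
    Tendsto (fun x => ∫ t in Iic x, f t) atBot (𝓝 0) := by
  have hempty : ⋂ x : ℝ, Iic (-x) = ∅ :=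
    eq_empty_of_forall_notMem fun t ht => by
      have := mem_iInter.1 ht (-t + 1)
      simp only [mem_Iic, neg_add_rev, neg_neg] at this
      linarith
  have h := tendsto_setIntegral_of_antitone (fun x : ℝ => measurableSet_Iic)
    (fun _ _ h => Iic_subset_Iic.2 (neg_le_neg h)) ⟨0, hf.integrableOn⟩
  rw [hempty, Measure.restrict_empty, integral_zero_measure] at h
  refine (h.comp tendsto_neg_atBot_atTop).congr fun x => ?_
  simp only [Function.comp_apply, neg_neg]

lemma sub_eq_setIntegral_Ioc (hf : Integrable f) (hF : ∀ x, F x = ∫ t in Iic x, f t)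
    {a b : ℝ} (hab : a ≤ b) : F b - F a = ∫ t in Ioc a b, f t := by
  rw [hF, hF, intervalIntegral.integral_Iic_sub_Iic hf.integrableOn hf.integrableOn,
    intervalIntegral.integral_of_le hab]

lemma sub_mem_Icc_of_integral_eq_one (hf_nonneg : ∀ t, 0 ≤ f t) (hf_dens : ∫ t, f t = 1)
    (hF : ∀ x, F x = ∫ t in Iic x, f t) {a b : ℝ} (hab : a ≤ b) : F b - F a ∈ Icc 0 1 := by
  have hf : Integrable f := .of_integral_ne_zero (by simp [hf_dens])
  rw [sub_eq_setIntegral_Ioc hf hF hab]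
  exact ⟨setIntegral_nonneg measurableSet_Ioc fun t _ => hf_nonneg t,
    hf_dens ▸ setIntegral_le_integral hf (Eventually.of_forall hf_nonneg)⟩

lemma sub_le_two_mul_rpow_neg (hf : Integrable f) (hF : ∀ x, F x = ∫ t in Iic x, f t)
    {q M n y : ℝ} (hq : 1 ≤ q) (hM : ∀ t, M ≤ |t| → f t ≤ |t| ^ (-q)) (hn : max M 1 ≤ n)
    (hy : 2 ≤ |y|) : F (n * y + n) - F (n * y - n) ≤ 2 * ((1 + |y|) / 3) ^ (-q) := by
  set s := (1 + |y|) / 3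
  have hn1 : 1 ≤ n := (le_max_right _ _).trans hn
  have hn0 : 0 < n := one_pos.trans_le hn1
  have hs : 1 ≤ s := by simp only [s]; linarith
  have hfar : ∀ t ∈ Ioc (n * y - n) (n * y + n), n * s ≤ |t| := by
    intro t ⟨ht1, ht2⟩
    have hdist : |n * y - t| ≤ n := abs_sub_le_iff.2 ⟨by linarith, by linarith⟩
    have := abs_sub_abs_le_abs_sub (n * y) t
    rw [abs_mul, abs_of_pos hn0] at this
    have hns : n * s = n * (1 + |y|) / 3 := by simp only [s]; ring
    nlinarith [mul_nonneg hn0.le (sub_nonneg.2 hy)]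
  have hbound : ∀ t ∈ Ioc (n * y - n) (n * y + n), f t ≤ n⁻¹ * s ^ (-q) := by
    intro t ht
    have hns : 0 < n * s := by positivity
    calc f t ≤ |t| ^ (-q) := hM t (((le_max_left _ _).trans hn).trans
            ((le_mul_of_one_le_right hn0.le hs).trans (hfar t ht)))
      _ ≤ (n * s) ^ (-q) := rpow_le_rpow_of_nonpos hns (hfar t ht) (by linarith)
      _ = n ^ (-q) * s ^ (-q) := mul_rpow hn0.le (by positivity)
      _ ≤ n ^ (-1 : ℝ) * s ^ (-q) := by gcongr
      _ = n⁻¹ * s ^ (-q) := by rw [rpow_neg_one]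
  calc F (n * y + n) - F (n * y - n) = ∫ t in Ioc (n * y - n) (n * y + n), f t :=
        sub_eq_setIntegral_Ioc hf hF (by linarith)
    _ ≤ ∫ _ in Ioc (n * y - n) (n * y + n), n⁻¹ * s ^ (-q) :=
        setIntegral_mono_on hf.integrableOn (integrableOn_const measure_Ioc_lt_top.ne)
          measurableSet_Ioc hbound
    _ = 2 * s ^ (-q) := by
        rw [setIntegral_const, Real.volume_real_Ioc_of_le (by linarith), smul_eq_mul]
        field_simp
        ring

lemma abs_mul_log_sub_le (hf_nonneg : ∀ t, 0 ≤ f t) (hf_dens : ∫ t, f t = 1)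
    (hF : ∀ x, F x = ∫ t in Iic x, f t) {q a M n y : ℝ} (hq : 1 ≤ q) (ha0 : 0 ≤ a) (ha1 : a < 1)
    (hM : ∀ t, M ≤ |t| → f t ≤ |t| ^ (-q)) (hn : max M 1 ≤ n) :
    |(F (n * y + n) - F (n * y - n)) * log (F (n * y + n) - F (n * y - n))| ≤
      (1 + 2 ^ a / (1 - a)) * ((1 + |y|) / 3) ^ (-(q * a)) := by
  have hf : Integrable f := .of_integral_ne_zero (by simp [hf_dens])
  have hn0 : 0 ≤ n := zero_le_one.trans ((le_max_right _ _).trans hn)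
  obtain ⟨hG0, hG1⟩ := sub_mem_Icc_of_integral_eq_one hf_nonneg hf_dens hF
    (by linarith : n * y - n ≤ n * y + n)
  set G := F (n * y + n) - F (n * y - n)
  set s := (1 + |y|) / 3
  have hs : 0 < s := by positivity
  have hC : 0 ≤ 2 ^ a / (1 - a) := div_nonneg (by positivity) (sub_nonneg.2 ha1.le)
  rcases le_or_gt 2 |y| with hy | hy
  · calc |G * log G| ≤ G ^ a / (1 - a) := abs_mul_log_le_rpow_div hG0 hG1 ha1
      _ ≤ (2 * s ^ (-q)) ^ a / (1 - a) := by
          gcongr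
          exact sub_le_two_mul_rpow_neg hf hF hq hM hn hy
      _ = 2 ^ a / (1 - a) * s ^ (-(q * a)) := by
          rw [mul_rpow zero_le_two (by positivity), ← rpow_mul hs.le, neg_mul]
          ring
      _ ≤ (1 + 2 ^ a / (1 - a)) * s ^ (-(q * a)) := by
          gcongr
          exact le_add_of_nonneg_left zero_le_one
  · have hs1 : 1 ≤ s ^ (-(q * a)) :=
      one_le_rpow_of_pos_of_le_one_of_nonpos hs (by simp only [s]; linarith)
        (neg_nonpos.2 (mul_nonneg (by linarith) ha0))
    calc |G * log G| ≤ 1 := abs_mul_log_le_one hG0 hG1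
      _ ≤ (1 + 2 ^ a / (1 - a)) * s ^ (-(q * a)) :=
          one_le_mul_of_one_le_of_one_le (le_add_of_nonneg_right hC) hs1

lemma tendsto_mul_log_sub_atTop (hf : Integrable f) (hf_dens : ∫ t, f t = 1)
    (hF : ∀ x, F x = ∫ t in Iic x, f t) {y : ℝ} (hy₁ : y ≠ 1) (hy₂ : y ≠ -1) :
    Tendsto (fun n : ℕ => (F (n * y + n) - F (n * y - n)) * log (F (n * y + n) - F (n * y - n)))
      atTop (𝓝 0) := by
  have htop : Tendsto F atTop (𝓝 1) :=
    hf_dens ▸ (tendsto_setIntegral_Iic_atTop hf).congr fun x => (hF x).symm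
  have hbot : Tendsto F atBot (𝓝 0) :=
    (tendsto_setIntegral_Iic_atBot hf).congr fun x => (hF x).symm
  have hplus := tendsto_comp_natCast_mul htop hbot (c := y + 1) (by contrapose! hy₂; linarith)
  have hminus := tendsto_comp_natCast_mul htop hbot (c := y - 1) (sub_ne_zero.2 hy₁)
  simp only [mul_add_one, mul_sub_one] at hplus hminus
  set L := (if 0 < y + 1 then (1 : ℝ) else 0) - if 0 < y - 1 then 1 else 0
  have hL : L * log L = 0 := by
    simp only [L]
    split_ifs <;> norm_num
  rw [← hL]
  exact (continuous_mul_log.tendsto L).comp (hplus.sub hminus)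

lemma tendsto_integral_mul_log_sub_atTop (hf_nonneg : ∀ t, 0 ≤ f t) (hf_dens : ∫ t, f t = 1)
    (hF : ∀ x, F x = ∫ t in Iic x, f t) {ε : ℝ} (hε : 0 < ε)
    (htail : Tendsto (fun t : ℝ => |t| ^ (1 + ε) * f t) (cocompact ℝ) (𝓝 0)) :
    Tendsto (fun n : ℕ =>
        ∫ y, (F (n * y + n) - F (n * y - n)) * log (F (n * y + n) - F (n * y - n)))
      atTop (𝓝 0) := by
  have hf : Integrable f := .of_integral_ne_zero (by simp [hf_dens])
  obtain ⟨M, hM⟩ := exists_le_rpow_neg_of_tendsto_cocompact htail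
  obtain ⟨a, ha, ha1⟩ : ∃ a, (1 + ε)⁻¹ < a ∧ a < 1 :=
    exists_between (inv_lt_one_of_one_lt₀ (by linarith))
  have ha0 : 0 < a := lt_trans (by positivity) ha
  have hp : 1 < (1 + ε) * a := by rwa [inv_lt_iff_one_lt_mul₀' (by linarith)] at ha
  have hFm : Measurable F := Monotone.measurable fun _ _ hab =>
    sub_nonneg.1 (sub_mem_Icc_of_integral_eq_one hf_nonneg hf_dens hF hab).1
  rw [← integral_zero ℝ ℝ]
  refine tendsto_integral_filter_of_dominated_convergence
    (fun y => (1 + 2 ^ a / (1 - a)) * ((1 + |y|) / 3) ^ (-((1 + ε) * a)))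
    (Eventually.of_forall fun n => by fun_prop) ?_
    ((integrable_one_add_abs_div_rpow_neg hp (by norm_num)).const_mul _) ?_
  · filter_upwards [eventually_ge_atTop ⌈max M 1⌉₊] with n hn
    exact Eventually.of_forall fun y => abs_mul_log_sub_le hf_nonneg hf_dens hF (by linarith)
      ha0.le ha1 hM (Nat.ceil_le.1 hn)
  · filter_upwards [volume.ae_ne 1, volume.ae_ne (-1)] with y hy₁ hy₂
    exact tendsto_mul_log_sub_atTop hf hf_dens hF hy₁ hy₂

lemma setIntegral_Icc_comp_sub_left (hf : Integrable f) (hF : ∀ x, F x = ∫ t in Iic x, f t)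
    {x r : ℝ} (hr : 0 ≤ r) : ∫ θ in Icc (-r) r, f (x - θ) = F (x + r) - F (x - r) := by
  rw [integral_Icc_eq_integral_Ioc, ← intervalIntegral.integral_of_le (by linarith),
    intervalIntegral.integral_comp_sub_left, sub_neg_eq_add,
    intervalIntegral.integral_of_le (by linarith), sub_eq_setIntegral_Ioc hf hF (by linarith)]

lemma setIntegral_div_mul_log_div_div_self_mul {g : ℝ → ℝ} {s : Set ℝ} {c G : ℝ} (hc : c ≠ 0)
    (hG : ∫ θ in s, g θ = G) :
    (∫ θ in s, g θ / (c * (c⁻¹ * G)) * log (g θ / (c * (c⁻¹ * G)) / g θ)) * (c⁻¹ * G) =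
      -(1 / c) * (G * log G) := by
  simp_rw [mul_inv_cancel_left₀ hc, div_mul_log_div_div_self]
  rw [integral_const_mul, hG]
  rcases eq_or_ne G 0 with rfl | hG0
  · simp
  · field_simp

lemma tendsto_neg_one_div_mul_integral_mul_log_sub (hf_nonneg : ∀ t, 0 ≤ f t)
    (hf_dens : ∫ t, f t = 1) (hF : ∀ x, F x = ∫ t in Iic x, f t) {ε : ℝ} (hε : 0 < ε)
    (htail : Tendsto (fun t : ℝ => |t| ^ (1 + ε) * f t) (cocompact ℝ) (𝓝 0)) :
    Tendsto (fun i : ℕ =>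
        -(1 / (2 * (i : ℝ))) * ∫ x, (F (x + i) - F (x - i)) * log (F (x + i) - F (x - i)))
      atTop (𝓝 0) := by
  have h := (tendsto_integral_mul_log_sub_atTop hf_nonneg hf_dens hF hε htail).const_mul (-(1 / 2))
  rw [mul_zero] at h
  refine h.congr' ?_
  filter_upwards [eventually_gt_atTop 0] with i hi
  have hi' : (0 : ℝ) < i := Nat.cast_pos.2 hi
  rw [Measure.integral_comp_mul_left
      (fun x => (F (x + i) - F (x - i)) * log (F (x + i) - F (x - i))),
    abs_inv, abs_of_pos hi', smul_eq_mul]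
  field_simp

theorem stmt_2_general
    (f : ℝ → ℝ) (hf_nonneg : ∀ t, 0 ≤ f t)
    (hf_dens : ∫ t, f t = 1)
    (F : ℝ → ℝ) (hF : ∀ x, F x = ∫ t in Set.Iic x, f t)
    (ε : ℝ) (hε : 0 < ε)
    (htail : Tendsto (fun t : ℝ => |t| ^ (1 + ε) * f t) (cocompact ℝ) (nhds 0)) :
    (∀ x : ℝ, Integrable (fun θ : ℝ => f (x - θ))) ∧
    (∀ i : ℕ, 1 ≤ i →
      ∫ x : ℝ,
        (∫ θ in Set.Icc (-(i : ℝ)) (i : ℝ),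
            (f (x - θ) / ((2 * (i : ℝ)) * ((2 * (i : ℝ))⁻¹ * (F (x + i) - F (x - i))))) *
              Real.log
                ((f (x - θ) / ((2 * (i : ℝ)) * ((2 * (i : ℝ))⁻¹ * (F (x + i) - F (x - i))))) /
                  f (x - θ))) *
          ((2 * (i : ℝ))⁻¹ * (F (x + i) - F (x - i)))
        = -(1 / (2 * (i : ℝ))) *
            ∫ x : ℝ, (F (x + i) - F (x - i)) * Real.log (F (x + i) - F (x - i))) ∧
    Tendsto
      (fun i : ℕ =>
        -(1 / (2 * (i : ℝ))) *
          ∫ x : ℝ, (F (x + i) - F (x - i)) * Real.log (F (x + i) - F (x - i)))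
      atTop (nhds 0) := by
  have hf : Integrable f := .of_integral_ne_zero (by simp [hf_dens])
  refine ⟨fun x => hf.comp_sub_left x, fun i _ => ?_,
    tendsto_neg_one_div_mul_integral_mul_log_sub hf_nonneg hf_dens hF hε htail⟩
  have hc : 2 * (i : ℝ) ≠ 0 := by positivity
  rw [← integral_const_mul]
  congr 1 with x
  exact setIntegral_div_mul_log_div_div_self_mul hc
    (setIntegral_Icc_comp_sub_left hf hF (Nat.cast_nonneg i))

/-- For a location model `f(x-θ)` whose density has tails
`|t|^(1+ε) f(t) → 0`, the expected logarithmic discrepancy between the formal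
posterior under the uniform prior and the posteriors from the uniform priors
on `[-i,i]` equals `-(1/(2i)) ∫ (F(x+i)-F(x-i)) log(F(x+i)-F(x-i)) dx` and
tends to `0`; hence `π(θ) = 1` is a permissible prior. -/
theorem stmt_2
    (f : ℝ → ℝ) (hf_meas : Measurable f) (hf_nonneg : ∀ t, 0 ≤ f t)
    (hf_dens : ∫ t, f t = 1)
    (F : ℝ → ℝ) (hF : ∀ x, F x = ∫ t in Set.Iic x, f t)
    (ε : ℝ) (hε : 0 < ε)
    (htail : Tendsto (fun t : ℝ => |t| ^ (1 + ε) * f t) (cocompact ℝ) (nhds 0)) :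
    (∀ x : ℝ, Integrable (fun θ : ℝ => f (x - θ))) ∧
    (∀ i : ℕ, 1 ≤ i →
      ∫ x : ℝ,
        (∫ θ in Set.Icc (-(i : ℝ)) (i : ℝ),
            (f (x - θ) / ((2 * (i : ℝ)) * ((2 * (i : ℝ))⁻¹ * (F (x + i) - F (x - i))))) *
              Real.log
                ((f (x - θ) / ((2 * (i : ℝ)) * ((2 * (i : ℝ))⁻¹ * (F (x + i) - F (x - i))))) /
                  f (x - θ))) *
          ((2 * (i : ℝ))⁻¹ * (F (x + i) - F (x - i)))
        = -(1 / (2 * (i : ℝ))) *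
            ∫ x : ℝ, (F (x + i) - F (x - i)) * Real.log (F (x + i) - F (x - i))) ∧
    Tendsto
      (fun i : ℕ =>
        -(1 / (2 * (i : ℝ))) *
          ∫ x : ℝ, (F (x + i) - F (x - i)) * Real.log (F (x + i) - F (x - i)))
      atTop (nhds 0) :=
  stmt_2_general f hf_nonneg hf_dens F hF ε hε htail
end

section
/- Let f be a probability density on (0,∞) such that for some ε > 0, |t|^{1+ε} e^t f(e^t) → 0 as |t| → ∞. Consider the scale model p(x|θ) = θ^{-1} f(|x|/θ) for θ > 0. Then π(θ) = θ^{-1} is a permissible prior for this model: the formal posterior π(θ|x) ∝ θ^{-1} p(x|θ) is proper for every x ≠ 0, and with the approximating compact sets Θ_i = [e^{-i}, e^{i}] and restricted priors π_i(θ) = (2i)^{-1} θ^{-1} 1_{Θ_i}(θ), the expected logarithmic discrepancy ∫ κ{π(·|x) | π_i(·|x)} p_i(x) dx converges to 0 as i → ∞, where p_i(x) = ∫_{Θ_i} p(x|θ)π_i(θ)dθ. -/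
/-!
Restricting the prior to `Θₙ = [e⁻ⁿ, eⁿ]` turns the posterior into the full posterior conditioned
on `Θₙ`, so the discrepancy at `x` is `-log Π(Θₙ | x)`. Substituting `y = |x| / θ` and then
`|x| = exp (n σ)`, the expected discrepancy becomes `∫ negMulLog (Wₙ σ) dσ`, where `Wₙ σ` is the
mass that the log-scale density `h t = eᵗ f (eᵗ)` gives to `[n (σ - 1), n (σ + 1)]`.
Now `Wₙ σ → 1` for `|σ| < 1` and `Wₙ σ → 0` for `|σ| > 1`, while the tail bound
`h t ≤ |t| ^ (-(1 + ε))` gives `Wₙ σ ≤ C (1 + |σ|) ^ (-(1 + ε))` for all large `n`.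
As `negMulLog u ≤ u ^ (1 - δ) / δ`, dominated convergence applies.
-/

open MeasureTheory Filter Set Real Topology

section ChangeOfVariables

theorem image_const_div_Ioi_zero {a : ℝ} (ha : 0 < a) : (a / ·) '' Ioi 0 = Ioi 0 := by
  ext y
  refine ⟨?_, fun hy => ⟨a / y, div_pos ha hy, div_div_cancel₀ ha.ne'⟩⟩
  rintro ⟨θ, hθ, rfl⟩
  exact div_pos ha hθ

theorem image_const_div_Icc_of_pos {a b c : ℝ} (ha : 0 < a) (hb : 0 < b) (hc : 0 < c) :
    (a / ·) '' Icc b c = Icc (a / c) (a / b) := by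
  ext y
  constructor
  · rintro ⟨θ, ⟨hbθ, hθc⟩, rfl⟩
    exact ⟨div_le_div_of_nonneg_left ha.le (hb.trans_le hbθ) hθc,
      div_le_div_of_nonneg_left ha.le hb hbθ⟩
  · rintro ⟨hcy, hyb⟩
    have hy : 0 < y := (div_pos ha hc).trans_le hcy
    exact ⟨a / y, ⟨(le_div_comm₀ hb hy).2 hyb, (div_le_comm₀ hy hc).2 hcy⟩,
      div_div_cancel₀ ha.ne'⟩

variable {a : ℝ} {s : Set ℝ}

theorem hasDerivAt_const_div {θ : ℝ} (hθ : θ ≠ 0) :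
    HasDerivAt (a / ·) (-(a * (θ ^ 2)⁻¹)) θ := by
  simpa [div_eq_mul_inv] using (hasDerivAt_inv hθ).const_mul a

theorem abs_deriv_const_div_smul (g : ℝ → ℝ) (ha : 0 < a) {θ : ℝ} (hθ : 0 < θ) :
    |-(a * (θ ^ 2)⁻¹)| • g (a / θ) = a * (θ⁻¹ * g (a / θ) * θ⁻¹) := by
  rw [abs_neg, abs_of_pos (by positivity), smul_eq_mul, sq, mul_inv]
  ring

theorem injective_const_div (ha : a ≠ 0) : Function.Injective (a / · : ℝ → ℝ) :=
  fun _ _ huv => by simpa [div_div_cancel₀ ha] using congrArg (a / ·) huv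

theorem setIntegral_image_const_div (g : ℝ → ℝ) (ha : 0 < a) (hs : MeasurableSet s)
    (hs0 : s ⊆ Ioi 0) :
    ∫ y in (a / ·) '' s, g y = a * ∫ θ in s, θ⁻¹ * g (a / θ) * θ⁻¹ := by
  rw [integral_image_eq_integral_abs_deriv_smul hs
      (fun θ hθ => (hasDerivAt_const_div (hs0 hθ).ne').hasDerivWithinAt)
      (injective_const_div ha.ne').injOn, ← integral_const_mul]
  exact setIntegral_congr_fun hs fun θ hθ => abs_deriv_const_div_smul g ha (hs0 hθ)

theorem integrableOn_image_const_div_iff (g : ℝ → ℝ) (ha : 0 < a) (hs : MeasurableSet s)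
    (hs0 : s ⊆ Ioi 0) :
    IntegrableOn g ((a / ·) '' s) ↔ IntegrableOn (fun θ => θ⁻¹ * g (a / θ) * θ⁻¹) s := by
  rw [integrableOn_image_iff_integrableOn_abs_deriv_smul hs
      (fun θ hθ => (hasDerivAt_const_div (hs0 hθ).ne').hasDerivWithinAt)
      (injective_const_div ha.ne').injOn]
  exact (integrableOn_congr_fun (fun θ hθ => abs_deriv_const_div_smul g ha (hs0 hθ)) hs).trans
    (integrable_const_mul_iff (isUnit_iff_ne_zero.2 ha.ne') _)

theorem setIntegral_image_exp (g : ℝ → ℝ) (hs : MeasurableSet s) :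
    ∫ y in exp '' s, g y = ∫ t in s, exp t * g (exp t) := by
  simpa [abs_of_pos (exp_pos _)] using integral_image_eq_integral_abs_deriv_smul hs
    (fun t _ => (hasDerivAt_exp t).hasDerivWithinAt) exp_injective.injOn g

theorem integrable_exp_mul_comp_exp_iff (g : ℝ → ℝ) :
    Integrable (fun t => exp t * g (exp t)) ↔ IntegrableOn g (Ioi 0) := by
  simpa [abs_of_pos (exp_pos _)] using (integrableOn_image_iff_integrableOn_abs_deriv_smul
    MeasurableSet.univ (fun t _ => (hasDerivAt_exp t).hasDerivWithinAt)
    exp_injective.injOn g).symm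

theorem integral_exp_mul_comp_exp (g : ℝ → ℝ) :
    ∫ t, exp t * g (exp t) = ∫ y in Ioi 0, g y := by
  simpa using (setIntegral_image_exp g MeasurableSet.univ).symm

end ChangeOfVariables

section ScaleModel

variable (f : ℝ → ℝ) {a : ℝ}

theorem integral_Ioi_comp_const_div (ha : 0 < a) :
    ∫ θ in Ioi 0, θ⁻¹ * f (a / θ) * θ⁻¹ = a⁻¹ * ∫ y in Ioi 0, f y := by
  have hcov := setIntegral_image_const_div f ha measurableSet_Ioi subset_rfl
  rw [image_const_div_Ioi_zero ha] at hcov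
  rw [hcov, inv_mul_cancel_left₀ ha.ne']

theorem integrableOn_Ioi_comp_const_div (hf : IntegrableOn f (Ioi 0)) (ha : 0 < a) :
    IntegrableOn (fun θ => θ⁻¹ * f (a / θ) * θ⁻¹) (Ioi 0) := by
  rwa [← integrableOn_image_const_div_iff f ha measurableSet_Ioi subset_rfl,
    image_const_div_Ioi_zero ha]

theorem integral_Icc_exp_comp_const_div (ha : 0 < a) (n : ℝ) :
    ∫ θ in Icc (exp (-n)) (exp n), θ⁻¹ * f (a / θ) * θ⁻¹
      = a⁻¹ * ∫ y in Icc (a * exp (-n)) (a * exp n), f y := by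
  have hwin : Icc (a * exp (-n)) (a * exp n) = (a / ·) '' Icc (exp (-n)) (exp n) := by
    rw [image_const_div_Icc_of_pos ha (exp_pos _) (exp_pos _), exp_neg, div_inv_eq_mul,
      div_eq_mul_inv]
  rw [hwin, setIntegral_image_const_div f ha measurableSet_Icc
      fun θ hθ => (exp_pos _).trans_le hθ.1, inv_mul_cancel_left₀ ha.ne']

end ScaleModel

/-- The posterior for the prior `c * w` restricted to `s` is proportional to the full posterior
on `s`, so the log-ratio of the two is the constant `log (Z / I)`, where `I` and `Z` are the masses
of `p * w` on `s` and on `t`. -/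
theorem integral_restrict_posterior_mul_log_mul_marginal {α : Type*} [MeasurableSpace α]
    (μ : Measure α) (p w : α → ℝ) (s t : Set α) (c : ℝ) :
    (∫ θ in s, (p θ * (c * w θ) / ∫ τ in s, p τ * (c * w τ) ∂μ) *
        log ((p θ * (c * w θ) / ∫ τ in s, p τ * (c * w τ) ∂μ) /
          (p θ * w θ / ∫ τ in t, p τ * w τ ∂μ)) ∂μ) *
      ∫ θ in s, p θ * (c * w θ) ∂μ
    = c * ((∫ θ in s, p θ * w θ ∂μ) *
        log ((∫ θ in t, p θ * w θ ∂μ) / ∫ θ in s, p θ * w θ ∂μ)) := by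
  set I := ∫ θ in s, p θ * w θ ∂μ
  set Z := ∫ θ in t, p θ * w θ ∂μ
  have hcI : ∫ θ in s, p θ * (c * w θ) ∂μ = c * I := by
    rw [← integral_const_mul]
    exact integral_congr_ae (ae_of_all _ fun θ => by ring)
  rw [hcI]
  rcases eq_or_ne c 0 with rfl | hc
  · simp
  rcases eq_or_ne I 0 with hI | hI
  · simp [hI]
  have hpt : ∀ θ,
      (p θ * (c * w θ) / (c * I)) * log ((p θ * (c * w θ) / (c * I)) / (p θ * w θ / Z))
        = p θ * w θ * (I⁻¹ * log (Z / I)) := by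
    intro θ
    have hposterior : p θ * (c * w θ) / (c * I) = p θ * w θ / I := by
      rw [mul_left_comm, mul_div_mul_left _ _ hc]
    rcases eq_or_ne (p θ * w θ) 0 with hpw | hpw
    · simp [hposterior, hpw]
    · rw [hposterior, div_div_div_cancel_left' _ _ hpw]
      ring
  rw [integral_congr_ae (ae_of_all _ hpt), integral_mul_const]
  change I * _ * (c * I) = _
  field_simp

noncomputable def windowMass (g : ℝ → ℝ) (n σ : ℝ) : ℝ :=
  ∫ t in Icc (n * σ - n) (n * σ + n), g t

theorem integral_inv_abs_mul_negMulLog_eq (f : ℝ → ℝ) {n : ℝ} (hn : 0 < n) :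
    ∫ x, (2 * n)⁻¹ * (|x|⁻¹ * negMulLog (∫ y in Icc (|x| * exp (-n)) (|x| * exp n), f y))
      = ∫ σ, negMulLog (windowMass (fun t => exp t * f (exp t)) n σ) := by
  have hwin : ∀ s, ∫ y in Icc (exp s * exp (-n)) (exp s * exp n), f y
      = windowMass (fun t => exp t * f (exp t)) n (s / n) := by
    intro s
    rw [windowMass, mul_div_cancel₀ _ hn.ne', ← exp_add, ← exp_add, ← image_exp_Icc,
      setIntegral_image_exp f measurableSet_Icc, ← sub_eq_add_neg]
  calc _ = (2 * n)⁻¹ * (2 * ∫ s, exp s * ((exp s)⁻¹ *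
          negMulLog (∫ y in Icc (exp s * exp (-n)) (exp s * exp n), f y))) := by
        rw [integral_const_mul, integral_comp_abs
          (f := fun y => y⁻¹ * negMulLog (∫ z in Icc (y * exp (-n)) (y * exp n), f z)),
          ← integral_exp_mul_comp_exp]
    _ = n⁻¹ * ∫ s, negMulLog (windowMass (fun t => exp t * f (exp t)) n (s / n)) := by
        simp only [mul_inv_cancel_left₀ (exp_pos _).ne', hwin]
        field_simp
    _ = ∫ σ, negMulLog (windowMass (fun t => exp t * f (exp t)) n σ) := by
        rw [Measure.integral_comp_div (fun σ => negMulLog (windowMass _ n σ)), abs_of_pos hn,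
          smul_eq_mul, inv_mul_cancel_left₀ hn.ne']

theorem abs_sub_one_mul_le_abs_of_mem_Icc {n σ t : ℝ} (hn : 0 ≤ n)
    (ht : t ∈ Icc (n * σ - n) (n * σ + n)) : n * (|σ| - 1) ≤ |t| := by
  have hdist : |n * σ - t| ≤ n := abs_sub_le_iff.2 ⟨by linarith [ht.1], by linarith [ht.2]⟩
  have := abs_sub_abs_le_abs_sub (n * σ) t
  rw [abs_mul, abs_of_nonneg hn] at this
  linarith

theorem negMulLog_le_rpow_div {u δ : ℝ} (hu : 0 ≤ u) (hδ : 0 < δ) :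
    negMulLog u ≤ u ^ (1 - δ) / δ := by
  rcases hu.eq_or_lt with rfl | hu
  · simpa using div_nonneg (rpow_nonneg le_rfl (1 - δ)) hδ.le
  calc negMulLog u = u * log u⁻¹ := by rw [negMulLog, log_inv]; ring
    _ ≤ u * (u⁻¹ ^ δ / δ) := by gcongr; exact log_le_rpow_div (by positivity) hδ
    _ = u ^ (1 - δ) / δ := by
        rw [inv_rpow hu.le, rpow_sub hu, rpow_one]; ring

namespace windowMass

variable {g : ℝ → ℝ}

theorem nonneg (hg0 : ∀ t, 0 ≤ g t) (n σ : ℝ) : 0 ≤ windowMass g n σ :=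
  setIntegral_nonneg measurableSet_Icc fun t _ => hg0 t

theorem le_integral (hg0 : ∀ t, 0 ≤ g t) (hg : Integrable g) (n σ : ℝ) :
    windowMass g n σ ≤ ∫ t, g t :=
  setIntegral_le_integral hg (ae_of_all _ hg0)

theorem eq_intervalIntegral {n : ℝ} (hn : 0 ≤ n) (σ : ℝ) :
    windowMass g n σ = ∫ t in (n * σ - n)..(n * σ + n), g t := by
  rw [windowMass, integral_Icc_eq_integral_Ioc, intervalIntegral.integral_of_le (by linarith)]

theorem continuous (hg : Integrable g) {n : ℝ} (hn : 0 ≤ n) : Continuous (windowMass g n) := by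
  have hprim := intervalIntegral.continuous_primitive (fun _ _ => hg.intervalIntegrable) 0
  have hdiff : windowMass g n
      = fun σ => (∫ t in 0..(n * σ + n), g t) - ∫ t in 0..(n * σ - n), g t := by
    funext σ
    rw [eq_intervalIntegral hn, intervalIntegral.integral_interval_sub_left
      hg.intervalIntegrable hg.intervalIntegrable]
  rw [hdiff]
  exact (hprim.comp (by fun_prop)).sub (hprim.comp (by fun_prop))

theorem tendsto_integral_of_abs_lt_one (hg : Integrable g) {σ : ℝ} (hσ : |σ| < 1) :
    Tendsto (fun n : ℕ => windowMass g n σ) atTop (𝓝 (∫ t, g t)) := by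
  obtain ⟨hσ₁, hσ₂⟩ := abs_lt.1 hσ
  have hlo : Tendsto (fun n : ℕ => (n : ℝ) * σ - n) atTop atBot := by
    simpa [mul_sub] using
      tendsto_natCast_atTop_atTop.atTop_mul_const_of_neg (by linarith : σ - 1 < 0)
  have hhi : Tendsto (fun n : ℕ => (n : ℝ) * σ + n) atTop atTop := by
    simpa [mul_add] using
      tendsto_natCast_atTop_atTop.atTop_mul_const (by linarith : 0 < σ + 1)
  exact (intervalIntegral_tendsto_integral hg hlo hhi).congr
    fun n => (eq_intervalIntegral n.cast_nonneg σ).symm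

variable {ε M : ℝ}

theorem le_of_tail (hg : Integrable g) (hε : 0 ≤ ε)
    (hM : ∀ t, M ≤ |t| → g t ≤ |t| ^ (-(1 + ε))) {n σ : ℝ} (hn : 0 < n) (hσ : 1 < |σ|)
    (hnσ : M ≤ n * (|σ| - 1)) :
    windowMass g n σ ≤ 2 * n ^ (-ε) * (|σ| - 1) ^ (-(1 + ε)) := by
  have hR : 0 < n * (|σ| - 1) := mul_pos hn (by linarith)
  have hpt : ∀ t ∈ Icc (n * σ - n) (n * σ + n),
      g t ≤ (n * (|σ| - 1)) ^ (-(1 + ε)) := by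
    intro t ht
    have hle := abs_sub_one_mul_le_abs_of_mem_Icc hn.le ht
    exact (hM t (hnσ.trans hle)).trans (rpow_le_rpow_of_nonpos hR hle (by linarith))
  calc windowMass g n σ
        ≤ ∫ _ in Icc (n * σ - n) (n * σ + n), (n * (|σ| - 1)) ^ (-(1 + ε)) :=
        setIntegral_mono_on hg.integrableOn (integrableOn_const measure_Icc_lt_top.ne)
          measurableSet_Icc hpt
    _ = 2 * n * (n * (|σ| - 1)) ^ (-(1 + ε)) := by
        rw [setIntegral_const, volume_real_Icc_of_le (by linarith), smul_eq_mul]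
        ring_nf
    _ = 2 * n ^ (-ε) * (|σ| - 1) ^ (-(1 + ε)) := by
        have hpow : n * n ^ (-(1 + ε)) = n ^ (-ε) := by
          rw [show -(1 + ε) = -ε - 1 by ring, rpow_sub_one hn.ne']
          field_simp
        rw [mul_rpow hn.le (by linarith), ← hpow]
        ring

theorem tendsto_zero_of_one_lt_abs (hg0 : ∀ t, 0 ≤ g t) (hg : Integrable g) (hε : 0 < ε)
    (hM : ∀ t, M ≤ |t| → g t ≤ |t| ^ (-(1 + ε))) {σ : ℝ} (hσ : 1 < |σ|) :
    Tendsto (fun n : ℕ => windowMass g n σ) atTop (𝓝 0) := by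
  have hbound :
      Tendsto (fun n : ℕ => 2 * (n : ℝ) ^ (-ε) * (|σ| - 1) ^ (-(1 + ε))) atTop (𝓝 0) := by
    simpa using (((tendsto_rpow_neg_atTop hε).comp tendsto_natCast_atTop_atTop).const_mul
      2).mul_const ((|σ| - 1) ^ (-(1 + ε)))
  have hlarge : ∀ᶠ n : ℕ in atTop, 0 < (n : ℝ) ∧ M ≤ n * (|σ| - 1) := by
    have := tendsto_natCast_atTop_atTop.atTop_mul_const (by linarith : 0 < |σ| - 1)
    exact (tendsto_natCast_atTop_atTop.eventually_gt_atTop 0).and (this.eventually_ge_atTop M)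
  refine tendsto_of_tendsto_of_tendsto_of_le_of_le' tendsto_const_nhds hbound
    (Eventually.of_forall fun n => nonneg hg0 n σ) ?_
  filter_upwards [hlarge] with n hn
  exact le_of_tail hg hε.le hM hn.1 hσ hn.2

theorem le_rpow_one_add_abs (hg0 : ∀ t, 0 ≤ g t) (hg : Integrable g) (hg1 : ∫ t, g t = 1)
    (hε : 0 ≤ ε) (hM : ∀ t, M ≤ |t| → g t ≤ |t| ^ (-(1 + ε))) {n : ℝ} (hn : 1 ≤ n)
    (hnM : M ≤ n) (σ : ℝ) :
    windowMass g n σ ≤ 2 * 3 ^ (1 + ε) * (1 + |σ|) ^ (-(1 + ε)) := by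
  have hscale : 3 ^ (1 + ε) * (1 + |σ|) ^ (-(1 + ε)) = ((1 + |σ|) / 3) ^ (-(1 + ε)) := by
    rw [div_rpow (by positivity) (by norm_num), rpow_neg (by norm_num : (0 : ℝ) ≤ 3)]
    field_simp
  rw [mul_assoc, hscale]
  rcases lt_or_ge |σ| 2 with hσ | hσ
  · calc windowMass g n σ ≤ 1 := hg1 ▸ le_integral hg0 hg n σ
      _ ≤ 2 * 1 := by norm_num
      _ ≤ 2 * ((1 + |σ|) / 3) ^ (-(1 + ε)) := by
          gcongr
          exact one_le_rpow_of_pos_of_le_one_of_nonpos (by positivity) (by linarith) (by linarith)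
  · calc windowMass g n σ ≤ 2 * n ^ (-ε) * (|σ| - 1) ^ (-(1 + ε)) :=
          le_of_tail hg hε hM (by linarith) (by linarith) (by nlinarith)
      _ ≤ 2 * 1 * ((1 + |σ|) / 3) ^ (-(1 + ε)) := by
          have hn1 : n ^ (-ε) ≤ 1 := rpow_le_one_of_one_le_of_nonpos hn (by linarith)
          have hσ1 : (|σ| - 1) ^ (-(1 + ε)) ≤ ((1 + |σ|) / 3) ^ (-(1 + ε)) :=
            rpow_le_rpow_of_nonpos (by positivity) (by linarith) (by linarith)
          have : 0 ≤ (|σ| - 1) ^ (-(1 + ε)) := rpow_nonneg (by linarith) _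
          gcongr
      _ = 2 * ((1 + |σ|) / 3) ^ (-(1 + ε)) := by ring

end windowMass

theorem tendsto_negMulLog_windowMass {g : ℝ → ℝ} {ε M : ℝ} (hg0 : ∀ t, 0 ≤ g t)
    (hg : Integrable g) (hg1 : ∫ t, g t = 1) (hε : 0 < ε)
    (hM : ∀ t, M ≤ |t| → g t ≤ |t| ^ (-(1 + ε))) {σ : ℝ} (hσ : |σ| ≠ 1) :
    Tendsto (fun n : ℕ => negMulLog (windowMass g n σ)) atTop (𝓝 0) := by
  rcases hσ.lt_or_gt with hσ | hσ
  · have hW := windowMass.tendsto_integral_of_abs_lt_one hg hσ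
    rw [hg1] at hW
    simpa [Function.comp_def] using (continuous_negMulLog.tendsto 1).comp hW
  · simpa [Function.comp_def] using (continuous_negMulLog.tendsto 0).comp
      (windowMass.tendsto_zero_of_one_lt_abs hg0 hg hε hM hσ)

theorem tendsto_integral_negMulLog_windowMass {g : ℝ → ℝ} {ε M : ℝ} (hg0 : ∀ t, 0 ≤ g t)
    (hg : Integrable g) (hg1 : ∫ t, g t = 1) (hε : 0 < ε)
    (hM : ∀ t, M ≤ |t| → g t ≤ |t| ^ (-(1 + ε))) :
    Tendsto (fun n : ℕ => ∫ σ, negMulLog (windowMass g n σ)) atTop (𝓝 0) := by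
  -- `δ` is chosen so that `(1 + ε) * (1 - δ) > 1`, which makes the dominating function integrable.
  set δ := ε / (2 * (1 + ε)) with hδ_def
  have hδ : 0 < δ := by positivity
  have hδ1 : δ ≤ 1 := by rw [hδ_def, div_le_one (by positivity)]; linarith
  have hexp : (1 + ε) * (1 - δ) = 1 + ε / 2 := by rw [hδ_def]; field_simp; ring
  set C : ℝ := 2 * 3 ^ (1 + ε)
  have hC : 0 ≤ C := by positivity
  have hbound : Integrable fun σ : ℝ => C ^ (1 - δ) / δ * (1 + |σ|) ^ (-(1 + ε / 2)) :=
    (integrable_one_add_norm (by simp; linarith)).const_mul _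
  have hdom : ∀ n : ℕ, max 1 M ≤ n → ∀ σ,
      ‖negMulLog (windowMass g n σ)‖ ≤ C ^ (1 - δ) / δ * (1 + |σ|) ^ (-(1 + ε / 2)) := by
    intro n hn σ
    have hW0 := windowMass.nonneg hg0 n σ
    have hW1 : windowMass g n σ ≤ 1 := hg1 ▸ windowMass.le_integral hg0 hg n σ
    have hWC := windowMass.le_rpow_one_add_abs hg0 hg hg1 hε.le hM
      ((le_max_left _ _).trans hn) ((le_max_right _ _).trans hn) σ
    rw [norm_of_nonneg (negMulLog_nonneg hW0 hW1)]
    calc negMulLog (windowMass g n σ) ≤ windowMass g n σ ^ (1 - δ) / δ :=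
          negMulLog_le_rpow_div hW0 hδ
      _ ≤ (C * (1 + |σ|) ^ (-(1 + ε))) ^ (1 - δ) / δ := by
          gcongr
      _ = C ^ (1 - δ) / δ * (1 + |σ|) ^ (-(1 + ε / 2)) := by
          rw [mul_rpow hC (by positivity), ← rpow_mul (by positivity), neg_mul, hexp]
          ring
  have hlim : ∀ᵐ σ : ℝ, Tendsto (fun n : ℕ => negMulLog (windowMass g n σ)) atTop (𝓝 0) := by
    filter_upwards [Measure.ae_ne volume 1, Measure.ae_ne volume (-1)] with σ hσ₁ hσ₂
    refine tendsto_negMulLog_windowMass hg0 hg hg1 hε hM fun hσ => ?_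
    rcases (abs_eq zero_le_one).1 hσ with h | h <;> contradiction
  simpa using tendsto_integral_filter_of_dominated_convergence _
    (Eventually.of_forall fun n =>
      (continuous_negMulLog.comp (windowMass.continuous hg n.cast_nonneg)).aestronglyMeasurable)
    ((eventually_ge_atTop ⌈max 1 M⌉₊).mono fun n hn =>
      ae_of_all _ (hdom n ((Nat.le_ceil _).trans (Nat.cast_le.2 hn))))
    hbound hlim

theorem exists_le_rpow_of_tendsto_cocompact {g : ℝ → ℝ} {r : ℝ}
    (hg : Tendsto (fun t => |t| ^ r * g t) (cocompact ℝ) (𝓝 0)) :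
    ∃ M, ∀ t, M ≤ |t| → g t ≤ |t| ^ (-r) := by
  have hlt := hg.eventually (gt_mem_nhds one_pos)
  rw [cocompact_eq_atBot_atTop, ← comap_abs_atTop, eventually_comap, eventually_atTop] at hlt
  obtain ⟨M, hM⟩ := hlt
  refine ⟨max M 1, fun t ht => ?_⟩
  have hpos : 0 < |t| ^ r := rpow_pos_of_pos (by linarith [le_max_right M 1]) r
  rw [rpow_neg (abs_nonneg t), ← one_div, le_div_iff₀ hpos, mul_comm]
  exact (hM _ ((le_max_left _ _).trans ht) t rfl).le

theorem stmt_3_general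
    (f : ℝ → ℝ) (hf_nonneg : ∀ t, 0 ≤ f t)
    (hf_dens : ∫ t in Set.Ioi (0 : ℝ), f t = 1)
    (ε : ℝ) (hε : 0 < ε)
    (htail : Tendsto (fun t : ℝ => |t| ^ (1 + ε) * Real.exp t * f (Real.exp t))
      (cocompact ℝ) (nhds 0)) :
    (∀ x : ℝ, x ≠ 0 →
      IntegrableOn (fun θ : ℝ => θ⁻¹ * (θ⁻¹ * f (|x| / θ))) (Set.Ioi 0) ∧
        0 < ∫ θ in Set.Ioi (0 : ℝ), θ⁻¹ * (θ⁻¹ * f (|x| / θ))) ∧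
    Tendsto
      (fun i : ℕ =>
        ∫ x : ℝ,
          (∫ θ in Set.Icc (Real.exp (-(i : ℝ))) (Real.exp (i : ℝ)),
              ((θ⁻¹ * f (|x| / θ)) * ((2 * (i : ℝ))⁻¹ * θ⁻¹) /
                  (∫ τ in Set.Icc (Real.exp (-(i : ℝ))) (Real.exp (i : ℝ)),
                    (τ⁻¹ * f (|x| / τ)) * ((2 * (i : ℝ))⁻¹ * τ⁻¹))) *
                Real.log
                  (((θ⁻¹ * f (|x| / θ)) * ((2 * (i : ℝ))⁻¹ * θ⁻¹) /
                      (∫ τ in Set.Icc (Real.exp (-(i : ℝ))) (Real.exp (i : ℝ)),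
                        (τ⁻¹ * f (|x| / τ)) * ((2 * (i : ℝ))⁻¹ * τ⁻¹))) /
                    ((θ⁻¹ * f (|x| / θ)) * θ⁻¹ /
                      (∫ τ in Set.Ioi (0 : ℝ), (τ⁻¹ * f (|x| / τ)) * τ⁻¹)))) *
            (∫ θ in Set.Icc (Real.exp (-(i : ℝ))) (Real.exp (i : ℝ)),
              (θ⁻¹ * f (|x| / θ)) * ((2 * (i : ℝ))⁻¹ * θ⁻¹)))
      atTop (nhds 0) := by
  have hf : IntegrableOn f (Ioi 0) := Integrable.of_integral_ne_zero (by simp [hf_dens])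
  have hcomm : ∀ a θ : ℝ, θ⁻¹ * (θ⁻¹ * f (a / θ)) = θ⁻¹ * f (a / θ) * θ⁻¹ :=
    fun _ _ => mul_comm _ _
  refine ⟨fun x hx => ?_, ?_⟩
  · simp only [hcomm]
    refine ⟨integrableOn_Ioi_comp_const_div f hf (abs_pos.2 hx), ?_⟩
    rw [integral_Ioi_comp_const_div f (abs_pos.2 hx), hf_dens, mul_one]
    positivity
  obtain ⟨M, hM⟩ := exists_le_rpow_of_tendsto_cocompact (htail.congr fun t => mul_assoc _ _ _)
  refine (tendsto_integral_negMulLog_windowMass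
    (fun t => mul_nonneg (exp_pos t).le (hf_nonneg _)) ((integrable_exp_mul_comp_exp_iff f).2 hf)
    (by rw [integral_exp_mul_comp_exp, hf_dens]) hε hM).congr' ?_
  filter_upwards [eventually_gt_atTop 0] with n hn
  rw [← integral_inv_abs_mul_negMulLog_eq f (Nat.cast_pos.2 hn)]
  refine integral_congr_ae ((Measure.ae_ne volume 0).mono fun x hx => ?_)
  have ha : 0 < |x| := abs_pos.2 hx
  dsimp only
  rw [integral_restrict_posterior_mul_log_mul_marginal volume (fun θ => θ⁻¹ * f (|x| / θ))
    (fun θ => θ⁻¹), integral_Icc_exp_comp_const_div f ha, integral_Ioi_comp_const_div f ha,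
    hf_dens, mul_one, div_mul_cancel_left₀ (inv_ne_zero ha.ne'), log_inv, negMulLog]
  ring

/-- For a scale model `p(x|θ) = θ⁻¹ f(|x|/θ)` whose density
satisfies `|t|^(1+ε) eᵗ f(eᵗ) → 0`, the prior `π(θ) = θ⁻¹` is permissible:
the formal posterior is proper for every `x ≠ 0`, and with the compact sets
`Θᵢ = [e⁻ⁱ, eⁱ]` the expected logarithmic discrepancy tends to `0`. -/
theorem stmt_3
    (f : ℝ → ℝ) (hf_meas : Measurable f) (hf_nonneg : ∀ t, 0 ≤ f t)
    (hf_dens : ∫ t in Set.Ioi (0 : ℝ), f t = 1)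
    (ε : ℝ) (hε : 0 < ε)
    (htail : Tendsto (fun t : ℝ => |t| ^ (1 + ε) * Real.exp t * f (Real.exp t))
      (cocompact ℝ) (nhds 0)) :
    (∀ x : ℝ, x ≠ 0 →
      IntegrableOn (fun θ : ℝ => θ⁻¹ * (θ⁻¹ * f (|x| / θ))) (Set.Ioi 0) ∧
        0 < ∫ θ in Set.Ioi (0 : ℝ), θ⁻¹ * (θ⁻¹ * f (|x| / θ))) ∧
    Tendsto
      (fun i : ℕ =>
        ∫ x : ℝ,
          (∫ θ in Set.Icc (Real.exp (-(i : ℝ))) (Real.exp (i : ℝ)),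
              ((θ⁻¹ * f (|x| / θ)) * ((2 * (i : ℝ))⁻¹ * θ⁻¹) /
                  (∫ τ in Set.Icc (Real.exp (-(i : ℝ))) (Real.exp (i : ℝ)),
                    (τ⁻¹ * f (|x| / τ)) * ((2 * (i : ℝ))⁻¹ * τ⁻¹))) *
                Real.log
                  (((θ⁻¹ * f (|x| / θ)) * ((2 * (i : ℝ))⁻¹ * θ⁻¹) /
                      (∫ τ in Set.Icc (Real.exp (-(i : ℝ))) (Real.exp (i : ℝ)),
                        (τ⁻¹ * f (|x| / τ)) * ((2 * (i : ℝ))⁻¹ * τ⁻¹))) /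
                    ((θ⁻¹ * f (|x| / θ)) * θ⁻¹ /
                      (∫ τ in Set.Ioi (0 : ℝ), (τ⁻¹ * f (|x| / τ)) * τ⁻¹)))) *
            (∫ θ in Set.Icc (Real.exp (-(i : ℝ))) (Real.exp (i : ℝ)),
              (θ⁻¹ * f (|x| / θ)) * ((2 * (i : ℝ))⁻¹ * θ⁻¹)))
      atTop (nhds 0) :=
  stmt_3_general f hf_nonneg hf_dens ε hε htail
end

section
/- Let p(x|θ), x ∈ X, θ ∈ Θ ⊆ ℝ, be a family of probability densities with respect to a σ-finite measure μ, let t : X → T be measurable, and suppose the Fisher–Neyman factorization holds: there exist measurable g : T × Θ → [0,∞) and h : X → [0,∞) with p(x|θ) = g(t(x), θ) h(x) for μ-a.e. x and each θ. Let p_t(t|θ) denote the density (with respect to a σ-finite measure ν on T) of t(x) when x has density p(·|θ). Then for every proper prior density q on Θ, the expected information is unchanged by reduction to t: I{q | M} = ∫∫ p(x|θ) q(θ) log( p(θ|x)/q(θ) ) dμ(x) dθ equals I{q | M_t} = ∫∫ p_t(t|θ) q(θ) log( q(θ|t)/q(θ) ) dν(t) dθ, where p(θ|x) and q(θ|t)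 are the posteriors of θ given x and given t respectively. -/
open MeasureTheory Filter
open scoped ENNReal NNReal

/-- Auxiliary: swap the order of almost-everywhere quantifiers for a jointly
measurable predicate over σ-finite measures. -/
lemma ae_swap_aux {α β : Type*} [MeasurableSpace α] [MeasurableSpace β]
    (μ : Measure α) (ρ : Measure β) [SigmaFinite μ] [SigmaFinite ρ]
    {P : α → β → Prop} (hP : MeasurableSet {z : α × β | P z.1 z.2})
    (hae : ∀ᵐ b ∂ρ, ∀ᵐ a ∂μ, P a b) :
    ∀ᵐ a ∂μ, ∀ᵐ b ∂ρ, P a b := by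
  have hsw : MeasurableSet {z : β × α | ¬ P z.2 z.1} := by
    have : {z : β × α | ¬ P z.2 z.1} = Prod.swap ⁻¹' ({z : α × β | P z.1 z.2}ᶜ) := rfl
    rw [this]
    exact measurable_swap hP.compl
  have h1 : ρ.prod μ {z : β × α | ¬ P z.2 z.1} = 0 := by
    rw [Measure.measure_prod_null hsw]
    filter_upwards [hae] with b hb
    simpa [ae_iff] using hb
  have h2 : μ.prod ρ {z : α × β | ¬ P z.1 z.2} = 0 := by
    have hsw2 : MeasurableSet {z : α × β | ¬ P z.1 z.2} := by
      have : {z : α × β | ¬ P z.1 z.2} = {z : α × β | P z.1 z.2}ᶜ := rfl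
      rw [this]; exact hP.compl
    rw [← Measure.prod_swap, Measure.map_apply measurable_swap hsw2]
    exact h1
  have h3 : ∀ᵐ z ∂μ.prod ρ, P z.1 z.2 := by
    rw [ae_iff]; exact h2
  exact Measure.ae_ae_of_ae_prod h3

/-- Auxiliary: pushing forward a `withDensity` along the map used in the
density commutes. -/
lemma map_withDensity_aux {X T : Type*} [MeasurableSpace X] [MeasurableSpace T]
    (M : Measure X) (t : X → T) (ht : Measurable t) {f : T → ℝ≥0∞} (hf : Measurable f) :
    (M.withDensity fun x => f (t x)).map t = (M.map t).withDensity f := by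
  ext A hA
  rw [Measure.map_apply ht hA, withDensity_apply _ (ht hA), withDensity_apply _ hA,
    setLIntegral_map hA hf ht]

set_option maxHeartbeats 1000000

/-- compatibility with sufficient statistics: Under the
Fisher–Neyman factorization `p(x|θ) = g(t(x),θ) h(x)`, the expected
information of any proper prior is unchanged by reduction of the data to the
sufficient statistic `t`. -/
theorem stmt_10
    {X T : Type*} [MeasurableSpace X] [MeasurableSpace T]
    (μ : Measure X) (ν : Measure T) [SigmaFinite μ] [SigmaFinite ν]
    (Θ : Set ℝ) (hΘ : MeasurableSet Θ)
    (p : X → ℝ → ℝ) (hmeas : Measurable (Function.uncurry p))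
    (hnonneg : ∀ x θ, 0 ≤ p x θ)
    (hdens : ∀ θ ∈ Θ, ∫ x, p x θ ∂μ = 1)
    (t : X → T) (ht : Measurable t)
    (g : T → ℝ → ℝ) (h : X → ℝ)
    (hg : Measurable (Function.uncurry g)) (hh : Measurable h)
    (hgnonneg : ∀ s θ, 0 ≤ g s θ) (hhnonneg : ∀ x, 0 ≤ h x)
    (hfact : ∀ θ ∈ Θ, ∀ᵐ x ∂μ, p x θ = g (t x) θ * h x)
    (pt : T → ℝ → ℝ) (hpt_meas : Measurable (Function.uncurry pt))
    (hpt_nonneg : ∀ s θ, 0 ≤ pt s θ)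
    (hpt : ∀ θ ∈ Θ, ∀ A : Set T, MeasurableSet A →
      ∫ x in t ⁻¹' A, p x θ ∂μ = ∫ s in A, pt s θ ∂ν)
    (q : ℝ → ℝ) (hq_nonneg : ∀ θ, 0 ≤ q θ) (hq_dens : ∫ θ in Θ, q θ = 1) :
    ∫ θ in Θ,
        q θ *
          ∫ x, p x θ * Real.log ((p x θ * q θ / (∫ τ in Θ, p x τ * q τ)) / q θ) ∂μ
      = ∫ θ in Θ,
          q θ *
            ∫ s, pt s θ *
              Real.log ((pt s θ * q θ / (∫ τ in Θ, pt s τ * q τ)) / q θ) ∂ν := by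
  classical
  -- the prior is integrable, so has a measurable nonnegative representative `q₀`
  have hqi : IntegrableOn q Θ := by
    by_contra hcon
    rw [integral_undef hcon] at hq_dens
    exact one_ne_zero hq_dens.symm
  set q₀ : ℝ → ℝ := fun τ => max (hqi.1.mk q τ) 0 with hq₀def
  have hq₀m : Measurable q₀ := hqi.1.stronglyMeasurable_mk.measurable.max measurable_const
  have hq₀ae : (fun τ => q τ) =ᵐ[volume.restrict Θ] q₀ := by
    filter_upwards [hqi.1.ae_eq_mk] with τ hτ
    rw [hq₀def]
    simp only [← hτ, max_eq_left (hq_nonneg τ)]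
  have hq₀nn : ∀ τ, 0 ≤ q₀ τ := fun τ => le_max_right _ _
  -- measurable sections
  have hpm : ∀ θ, Measurable fun x => p x θ := fun θ => hmeas.comp measurable_prodMk_right
  have hptm : ∀ θ, Measurable fun s => pt s θ := fun θ => hpt_meas.comp measurable_prodMk_right
  have hgm : ∀ θ, Measurable fun s => g s θ := fun θ => hg.comp measurable_prodMk_right
  have hhE : Measurable fun x => ENNReal.ofReal (h x) := ENNReal.measurable_ofReal.comp hh
  have hgE : ∀ θ, Measurable fun s => ENNReal.ofReal (g s θ) := fun θ =>
    ENNReal.measurable_ofReal.comp (hgm θ)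
  have hptE : ∀ θ, Measurable fun s => ENNReal.ofReal (pt s θ) := fun θ =>
    ENNReal.measurable_ofReal.comp (hptm θ)
  -- replace `q` by `q₀` inside the mixtures
  have hZq : ∀ x, (∫ τ in Θ, p x τ * q τ) = ∫ τ in Θ, p x τ * q₀ τ := fun x =>
    integral_congr_ae (by filter_upwards [hq₀ae] with τ hτ; rw [hτ])
  have hZtq : ∀ s, (∫ τ in Θ, pt s τ * q τ) = ∫ τ in Θ, pt s τ * q₀ τ := fun s =>
    integral_congr_ae (by filter_upwards [hq₀ae] with τ hτ; rw [hτ])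
  -- the "marginal likelihood" of the sufficient statistic part
  set G : T → ℝ := fun s => ∫ τ in Θ, g s τ * q₀ τ with hGdef
  have hGm : Measurable G := by
    have hsm : StronglyMeasurable fun z : T × ℝ => g z.1 z.2 * q₀ z.2 :=
      ((hg.comp (measurable_fst.prodMk measurable_snd)).mul
        (hq₀m.comp measurable_snd)).stronglyMeasurable
    exact hsm.integral_prod_right'.measurable
  -- integrability of the likelihoods
  have hp_int : ∀ θ ∈ Θ, Integrable (fun x => p x θ) μ := by
    intro θ hθ
    by_contra hcon
    have := hdens θ hθ
    rw [integral_undef hcon] at this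
    exact one_ne_zero this.symm
  have hpt_int : ∀ θ ∈ Θ, Integrable (fun s => pt s θ) ν := by
    intro θ hθ
    by_contra hcon
    have h1 := hpt θ hθ Set.univ MeasurableSet.univ
    rw [Set.preimage_univ, Measure.restrict_univ, Measure.restrict_univ, hdens θ hθ,
      integral_undef hcon] at h1
    exact one_ne_zero h1
  -- the pushforward identity for each θ ∈ Θ
  have M1 : ∀ θ ∈ Θ, (μ.withDensity fun x => ENNReal.ofReal (p x θ)).map t
      = ν.withDensity fun s => ENNReal.ofReal (pt s θ) := by
    intro θ hθ
    ext A hA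
    rw [Measure.map_apply ht hA, withDensity_apply _ (ht hA), withDensity_apply _ hA,
      ← ofReal_integral_eq_lintegral_ofReal ((hp_int θ hθ).restrict)
        (Eventually.of_forall fun x => hnonneg x θ),
      ← ofReal_integral_eq_lintegral_ofReal ((hpt_int θ hθ).restrict)
        (Eventually.of_forall fun s => hpt_nonneg s θ),
      hpt θ hθ A hA]
  -- the pushforward of `h·μ` and its Radon–Nikodym derivative
  set lam : Measure T := (μ.withDensity fun x => ENNReal.ofReal (h x)).map t with hlam
  set k : T → ℝ≥0∞ := lam.rnDeriv ν with hk
  have hkm : Measurable k := Measure.measurable_rnDeriv _ _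
  have M2 : ∀ θ ∈ Θ, (μ.withDensity fun x => ENNReal.ofReal (p x θ)).map t
      = lam.withDensity fun s => ENNReal.ofReal (g s θ) := by
    intro θ hθ
    have hgtE : Measurable fun x => ENNReal.ofReal (g (t x) θ) := (hgE θ).comp ht
    have e1 : (fun x => ENNReal.ofReal (p x θ))
        =ᵐ[μ] (fun x => ENNReal.ofReal (h x)) * fun x => ENNReal.ofReal (g (t x) θ) := by
      filter_upwards [hfact θ hθ] with x hx
      rw [Pi.mul_apply, hx, ENNReal.ofReal_mul (hgnonneg _ _), mul_comm]
    rw [withDensity_congr_ae e1, withDensity_mul μ hhE hgtE]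
    exact map_withDensity_aux _ t ht (hgE θ)
  -- pointwise a.e. identity `pt(s,θ) = g(s,θ)·k(s)` in `ℝ≥0∞`
  have hptg : ∀ θ ∈ Θ, (fun s => ENNReal.ofReal (pt s θ))
      =ᵐ[ν] fun s => ENNReal.ofReal (g s θ) * k s := by
    intro θ hθ
    have hdec := lam.haveLebesgueDecomposition_add ν
    have e2 : ν.withDensity (fun s => ENNReal.ofReal (pt s θ))
        = (lam.singularPart ν).withDensity (fun s => ENNReal.ofReal (g s θ))
          + (ν.withDensity k).withDensity (fun s => ENNReal.ofReal (g s θ)) := by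
      rw [← withDensity_add_measure, ← hdec, ← M2 θ hθ, M1 θ hθ]
    have hS0 : (lam.singularPart ν).withDensity (fun s => ENNReal.ofReal (g s θ)) = 0 := by
      refine Measure.eq_zero_of_absolutelyContinuous_of_mutuallySingular (ν := ν) ?_ ?_
      · refine Measure.AbsolutelyContinuous.trans ?_
          (withDensity_absolutelyContinuous ν (fun s => ENNReal.ofReal (pt s θ)))
        refine Measure.absolutelyContinuous_of_le ?_
        rw [e2]
        exact Measure.le_add_right le_rfl
      · exact (Measure.mutuallySingular_singularPart lam ν).mono_ac
          (withDensity_absolutelyContinuous _ _) Measure.AbsolutelyContinuous.rfl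
    have e3 : (ν.withDensity k).withDensity (fun s => ENNReal.ofReal (g s θ))
        = ν.withDensity (k * fun s => ENNReal.ofReal (g s θ)) :=
      (withDensity_mul ν hkm (hgE θ)).symm
    rw [hS0, zero_add, e3] at e2
    have hfi : ∫⁻ s, ENNReal.ofReal (pt s θ) ∂ν ≠ ∞ := by
      rw [← ofReal_integral_eq_lintegral_ofReal (hpt_int θ hθ)
        (Eventually.of_forall fun s => hpt_nonneg s θ)]
      exact ENNReal.ofReal_ne_top
    have : (fun s => ENNReal.ofReal (pt s θ)) =ᵐ[ν] k * fun s => ENNReal.ofReal (g s θ) :=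
      (withDensity_eq_iff (hptE θ).aemeasurable
        (hkm.mul (hgE θ)).aemeasurable hfi).mp e2
    filter_upwards [this] with s hs
    rw [hs, Pi.mul_apply, mul_comm]
  -- Fubini forms of the two a.e. families
  have hfact2 : ∀ᵐ x ∂μ, ∀ᵐ τ ∂(volume.restrict Θ), p x τ = g (t x) τ * h x := by
    refine ae_swap_aux μ (volume.restrict Θ) ?_ ?_
    · have hm1 : Measurable fun z : X × ℝ => p z.1 z.2 := hmeas
      exact MeasureTheory.StronglyMeasurable.measurableSet_eq_fun hm1.stronglyMeasurable
        ((hg.comp ((ht.comp measurable_fst).prodMk measurable_snd)).mul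
          (hh.comp measurable_fst)).stronglyMeasurable
    · filter_upwards [ae_restrict_mem hΘ] with τ hτ
      exact hfact τ hτ
  have hptg2 : ∀ᵐ s ∂ν, ∀ᵐ τ ∂(volume.restrict Θ),
      ENNReal.ofReal (pt s τ) = ENNReal.ofReal (g s τ) * k s := by
    refine ae_swap_aux ν (volume.restrict Θ) ?_ ?_
    · have hm2 : Measurable fun z : T × ℝ => ENNReal.ofReal (pt z.1 z.2) :=
        ENNReal.measurable_ofReal.comp hpt_meas
      have hm3 : Measurable fun z : T × ℝ => ENNReal.ofReal (g z.1 z.2) * k z.1 :=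
        (ENNReal.measurable_ofReal.comp hg).mul (hkm.comp measurable_fst)
      exact MeasureTheory.StronglyMeasurable.measurableSet_eq_fun hm2.stronglyMeasurable
        hm3.stronglyMeasurable
    · filter_upwards [ae_restrict_mem hΘ] with τ hτ
      exact hptg τ hτ
  -- main congruence over the prior
  refine integral_congr_ae ?_
  filter_upwards [ae_restrict_mem hΘ] with θ hθ
  by_cases hq0 : q θ = 0
  · rw [hq0, zero_mul, zero_mul]
  congr 1
  set F : T → ℝ := fun s => Real.log (g s θ / G s) with hF
  have hFm : Measurable F := Real.measurable_log.comp ((hgm θ).div hGm)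
  -- transfer of the common integrand through the sufficient statistic
  have htrans : ∫ x, p x θ * F (t x) ∂μ = ∫ s, pt s θ * F s ∂ν := by
    have e1 : ∫ x, p x θ * F (t x) ∂μ
        = ∫ x, (fun x => (p x θ).toNNReal) x • F (t x) ∂μ := by
      refine integral_congr_ae (Eventually.of_forall fun x => ?_)
      simp [NNReal.smul_def, Real.coe_toNNReal _ (hnonneg x θ)]
    rw [e1, ← integral_withDensity_eq_integral_smul (hpm θ).real_toNNReal]
    have e2 : (μ.withDensity fun x => (((p x θ).toNNReal : ℝ≥0) : ℝ≥0∞))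
        = μ.withDensity fun x => ENNReal.ofReal (p x θ) := rfl
    rw [e2, ← integral_map ht.aemeasurable hFm.aestronglyMeasurable, M1 θ hθ]
    have e3 : (ν.withDensity fun s => ENNReal.ofReal (pt s θ))
        = ν.withDensity fun s => (((pt s θ).toNNReal : ℝ≥0) : ℝ≥0∞) := rfl
    rw [e3, integral_withDensity_eq_integral_smul (hptm θ).real_toNNReal]
    refine integral_congr_ae (Eventually.of_forall fun s => ?_)
    simp [NNReal.smul_def, Real.coe_toNNReal _ (hpt_nonneg s θ)]
  have hLHS : ∫ x, p x θ * Real.log ((p x θ * q θ / ∫ τ in Θ, p x τ * q τ) / q θ) ∂μ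
      = ∫ x, p x θ * F (t x) ∂μ := by
    refine integral_congr_ae ?_
    filter_upwards [hfact θ hθ, hfact2] with x hx1 hx2
    rw [hZq x]
    by_cases hp0 : p x θ = 0
    · rw [hp0, zero_mul, zero_mul]
    have hhx : h x ≠ 0 := fun h0 => hp0 (by rw [hx1, h0, mul_zero])
    have hZx : (∫ τ in Θ, p x τ * q₀ τ) = h x * G (t x) := by
      simp only [hGdef]
      rw [← integral_const_mul]
      refine integral_congr_ae ?_
      filter_upwards [hx2] with τ hτ
      rw [hτ]; ring
    rw [hZx, hx1, hF]
    congr 2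
    rw [div_div, show g (t x) θ * h x * q θ = h x * q θ * g (t x) θ by ring,
      show h x * G (t x) * q θ = h x * q θ * G (t x) by ring,
      mul_div_mul_left _ _ (mul_ne_zero hhx hq0)]
  have hRHS : ∫ s, pt s θ * Real.log ((pt s θ * q θ / ∫ τ in Θ, pt s τ * q τ) / q θ) ∂ν
      = ∫ s, pt s θ * F s ∂ν := by
    refine integral_congr_ae ?_
    filter_upwards [hptg θ hθ, hptg2] with s hs1 hs2
    rw [hZtq s]
    by_cases hpt0 : pt s θ = 0
    · rw [hpt0, zero_mul, zero_mul]
    have hkne : k s ≠ ∞ := by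
      intro hktop
      rw [hktop] at hs1
      rcases eq_or_ne (ENNReal.ofReal (g s θ)) 0 with h0 | h0
      · rw [h0, zero_mul] at hs1
        exact hpt0 (le_antisymm (by simpa [ENNReal.ofReal_eq_zero] using hs1.le)
          (hpt_nonneg s θ))
      · exact (ENNReal.ofReal_ne_top (r := pt s θ)) (by rw [hs1, ENNReal.mul_top h0])
    set K : ℝ := (k s).toReal with hKdef
    have hkK : k s = ENNReal.ofReal K := by rw [hKdef, ENNReal.ofReal_toReal hkne]
    have key : ∀ τ : ℝ, ENNReal.ofReal (pt s τ) = ENNReal.ofReal (g s τ) * k s →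
        pt s τ = g s τ * K := by
      intro τ hτ
      rw [hkK, ← ENNReal.ofReal_mul (hgnonneg s τ)] at hτ
      exact (ENNReal.ofReal_eq_ofReal_iff (hpt_nonneg s τ)
        (mul_nonneg (hgnonneg s τ) ENNReal.toReal_nonneg)).mp hτ
    have hptK := key θ hs1
    have hKne : K ≠ 0 := fun h0 => hpt0 (by rw [hptK, h0, mul_zero])
    have hZts : (∫ τ in Θ, pt s τ * q₀ τ) = K * G s := by
      simp only [hGdef]
      rw [← integral_const_mul]
      refine integral_congr_ae ?_
      filter_upwards [hs2] with τ hτ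
      rw [key τ hτ]; ring
    rw [hZts, hptK, hF]
    congr 2
    rw [div_div, show g s θ * K * q θ = K * q θ * g s θ by ring,
      show K * G s * q θ = K * q θ * G s by ring,
      mul_div_mul_left _ _ (mul_ne_zero hKne hq0)]
  rw [hLHS, htrans, ← hRHS]
end

section
/- Let p(t_k|θ), t_k ∈ T_k, θ ∈ Θ ⊆ ℝ, be probability densities, let p and π* be continuous strictly positive functions on Θ with proper formal posteriors, and assume π* is posterior-consistent: for every θ ∈ Θ and ε > 0, P*({τ : |τ−θ| ≤ ε} | t_k) = ∫_{|τ−θ|≤ε} π*(τ|t_k) dτ → 1 in p(·|θ)-probability as k → ∞. Let Θ_0 ⊂ Θ be compact and θ an interior point of Θ_0. Then the ratio of restricted posteriors converges to one in probability: π*_0(θ|t_k)/p_0(θ|t_k) → 1 in p(·|θ)-probability as k → ∞, where π*_0(·|t_k) and p_0(·|t_k) are the posteriors on Θ_0 from the normalized restrictions of π* and p to Θ_0. -/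
/-!
Write `c = q θ / π*(θ)`. After cancelling `p(t|θ)`, the ratio of the restricted posteriors at `θ`
is `(∫_{Θ₀} p(t|·) q / ∫_{Θ₀} p(t|·) π*) / c`, and the inner quotient is the `π*₀(·|t)`-mean of
the continuous function `q / π*`. On a small interval `I ∋ θ` this function is within `η` of `c`,
and on the compact `Θ₀` it deviates from `c` by at most some `K`. Hence the mean is within
`η + K δ'` of `c` as soon as `π*(·|t)` gives mass at least `1 - δ'` to `I`, which by posterior
consistency happens with `p(·|θ)`-probability tending to one. The remaining data points, where
`p(t|θ) = 0`, carry no `p(·|θ)`-mass.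
-/

open MeasureTheory Filter Topology

theorem mul_div_div_mul_div_eq {𝕜 : Type*} [Field 𝕜] {P : 𝕜} (hP : P ≠ 0) (x y b v : 𝕜) :
    P * x / b / (P * y / v) = v / b / (y / x) := by
  rw [div_div_div_eq, div_div_div_eq, show P * x * v = P * (x * v) by ring,
    show b * (P * y) = P * (b * y) by ring, mul_div_mul_left _ _ hP]
  ring

theorem abs_mul_sub_const_mul_le {l x y c C : ℝ} (hl : 0 ≤ l) (hy : 0 < y)
    (h : |x / y - c| ≤ C) : |l * x - c * (l * y)| ≤ C * (l * y) := by
  have hxy : l * x - c * (l * y) = (l * y) * (x / y - c) := by field_simp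
  rw [hxy, abs_mul, abs_of_nonneg (mul_nonneg hl hy.le), mul_comm C]
  exact mul_le_mul_of_nonneg_left h (mul_nonneg hl hy.le)

theorem abs_div_sub_le_of_concentrated {a b B v c η K δ : ℝ} (hη : 0 ≤ η) (hK : 0 ≤ K)
    (hδ : δ < 1) (hB : 0 < B) (hab : a ≤ b) (hbB : b ≤ B) (hconc : |a / B - 1| ≤ δ)
    (hv : |v - c * b| ≤ η * a + K * (b - a)) :
    |v / b - c| ≤ η + K * δ := by
  have haB : (1 - δ) * B ≤ a := by
    have := (abs_le.1 hconc).1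
    rw [le_sub_iff_add_le, neg_add_eq_sub, le_div_iff₀ hB] at this
    exact this
  have hb : 0 < b := lt_of_lt_of_le (by nlinarith) hab
  have hba : b - a ≤ δ * b := by nlinarith
  rw [div_sub' hb.ne', abs_div, abs_of_pos hb, div_le_iff₀ hb, mul_comm b c]
  nlinarith [mul_le_mul_of_nonneg_left hab hη, mul_le_mul_of_nonneg_left hba hK]

theorem exists_pos_lt_one_and_mul_lt (K : ℝ) {r : ℝ} (hr : 0 < r) :
    ∃ δ, 0 < δ ∧ δ < 1 ∧ K * δ < r := by
  have hsmall : ∀ᶠ δ in 𝓝 (0 : ℝ), δ < 1 ∧ K * δ < r :=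
    (eventually_lt_nhds one_pos).and
      (((continuous_const_mul K).tendsto' 0 0 (mul_zero K)).eventually (eventually_lt_nhds hr))
  obtain ⟨δ, hδ, hδ0⟩ := ((hsmall.filter_mono nhdsWithin_le_nhds).and
    (self_mem_nhdsWithin (s := Set.Ioi 0))).exists
  exact ⟨δ, hδ0, hδ⟩

theorem exists_Icc_subset_and_abs_sub_le {f : ℝ → ℝ} {s : Set ℝ} {x η : ℝ}
    (hf : ContinuousAt f x) (hs : s ∈ 𝓝 x) (hη : 0 < η) :
    ∃ ε > 0, Set.Icc (x - ε) (x + ε) ⊆ s ∧ ∀ y ∈ Set.Icc (x - ε) (x + ε), |f y - f x| ≤ η := by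
  obtain ⟨ε, hε, hεI⟩ := Metric.nhds_basis_closedBall.eventually_iff.1
    ((show ∀ᶠ y in 𝓝 x, y ∈ s from hs).and (hf.eventually (Metric.closedBall_mem_nhds _ hη)))
  rw [Real.closedBall_eq_Icc] at hεI
  exact ⟨ε, hε, fun y hy => (hεI hy).1, fun y hy => by rw [← Real.dist_eq]; exact (hεI hy).2⟩

theorem setIntegral_le_of_subset_union_zero {α : Type*} [MeasurableSpace α] {μ : Measure α}
    {f : α → ℝ} {s t : Set α} (hf : Integrable f μ) (hf0 : 0 ≤ f)
    (hst : s ⊆ t ∪ {x | f x = 0}) :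
    ∫ x in s, f x ∂μ ≤ ∫ x in t, f x ∂μ :=
  calc ∫ x in s, f x ∂μ ≤ ∫ x in t ∪ {x | f x = 0}, f x ∂μ :=
        setIntegral_mono_set hf.integrableOn (ae_of_all _ hf0) hst.eventuallyLE
    _ ≤ ∫ x, f x ∂(μ.restrict t + μ.restrict {x | f x = 0}) :=
        integral_mono_measure (Measure.restrict_union_le _ _) (ae_of_all _ hf0)
          (hf.restrict.add_measure hf.restrict)
    _ = ∫ x in t, f x ∂μ := by
        rw [integral_add_measure hf.restrict hf.restrict,
          setIntegral_eq_zero_of_forall_eq_zero (t := {x | f x = 0}) fun x hx => hx, add_zero]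

theorem abs_setIntegral_sub_const_mul_le {α : Type*} [MeasurableSpace α] {μ : Measure α}
    {f g : α → ℝ} {S I : Set α} {c η K : ℝ} (hS : MeasurableSet S) (hI : MeasurableSet I)
    (hIS : I ⊆ S) (hf : IntegrableOn f S μ) (hg : IntegrableOn g S μ)
    (hnear : ∀ x ∈ I, |g x - c * f x| ≤ η * f x)
    (hfar : ∀ x ∈ S \ I, |g x - c * f x| ≤ K * f x) :
    |∫ x in S, g x ∂μ - c * ∫ x in S, f x ∂μ| ≤
      η * ∫ x in I, f x ∂μ + K * ∫ x in S \ I, f x ∂μ := by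
  have hh : IntegrableOn (fun x => g x - c * f x) S μ := hg.sub (hf.const_mul c)
  have piece : ∀ {J : Set α} {C : ℝ}, MeasurableSet J → J ⊆ S →
      (∀ x ∈ J, |g x - c * f x| ≤ C * f x) →
      |∫ x in J, (g x - c * f x) ∂μ| ≤ C * ∫ x in J, f x ∂μ := fun hJ hJS hC => by
    rw [← integral_const_mul]
    exact norm_integral_le_of_norm_le ((hf.mono_set hJS).const_mul _)
      ((ae_restrict_iff' hJ).2 (ae_of_all _ fun x hx => (Real.norm_eq_abs _).trans_le (hC x hx)))
  rw [← integral_const_mul, ← integral_sub hg (hf.const_mul c),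
    ← integral_inter_add_sdiff hI hh, Set.inter_eq_right.2 hIS]
  exact (abs_add_le _ _).trans (add_le_add (piece hI hIS hnear)
    (piece (hS.diff hI) Set.sdiff_subset hfar))

theorem abs_setIntegral_div_setIntegral_sub_le {α : Type*} [MeasurableSpace α]
    {μ : Measure α} {L π q : α → ℝ} {Θ Θ₀ I : Set α} {c η K δ : ℝ}
    (hΘ : MeasurableSet Θ) (hΘ₀ : MeasurableSet Θ₀) (hI : MeasurableSet I)
    (hIΘ₀ : I ⊆ Θ₀) (hΘ₀Θ : Θ₀ ⊆ Θ) (hL : ∀ x, 0 ≤ L x) (hπ : ∀ x ∈ Θ, 0 < π x)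
    (hLπ : IntegrableOn (fun x => L x * π x) Θ μ) (hLq : IntegrableOn (fun x => L x * q x) Θ μ)
    (hB : 0 < ∫ x in Θ, L x * π x ∂μ) (hη : 0 ≤ η) (hK : 0 ≤ K)
    (hnear : ∀ x ∈ I, |q x / π x - c| ≤ η) (hfar : ∀ x ∈ Θ₀, |q x / π x - c| ≤ K)
    (hδ : δ < 1)
    (hconc : |(∫ x in I, L x * π x ∂μ) / (∫ x in Θ, L x * π x ∂μ) - 1| ≤ δ) :
    |(∫ x in Θ₀, L x * q x ∂μ) / (∫ x in Θ₀, L x * π x ∂μ) - c| ≤ η + K * δ := by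
  have hLπ₀ := hLπ.mono_set hΘ₀Θ
  have hLπ_nonneg : ∀ {s : Set α}, MeasurableSet s → s ⊆ Θ →
      0 ≤ᵐ[μ.restrict s] fun x => L x * π x := fun hs hsΘ =>
    (ae_restrict_iff' hs).2 (ae_of_all _ fun x hx => mul_nonneg (hL x) (hπ x (hsΘ hx)).le)
  have hsplit := abs_setIntegral_sub_const_mul_le hΘ₀ hI hIΘ₀ hLπ₀ (hLq.mono_set hΘ₀Θ)
    (fun x hx => abs_mul_sub_const_mul_le (hL x) (hπ x (hΘ₀Θ (hIΘ₀ hx))) (hnear x hx))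
    (fun x hx => abs_mul_sub_const_mul_le (hL x) (hπ x (hΘ₀Θ hx.1)) (hfar x hx.1))
  rw [setIntegral_sdiff hI hLπ₀ hIΘ₀] at hsplit
  exact abs_div_sub_le_of_concentrated hη hK hδ hB
    (setIntegral_mono_set hLπ₀ (hLπ_nonneg hΘ₀ hΘ₀Θ) hIΘ₀.eventuallyLE)
    (setIntegral_mono_set hLπ (hLπ_nonneg hΘ le_rfl) hΘ₀Θ.eventuallyLE) hconc hsplit

theorem stmt_14_general
    (Θ : Set ℝ) (hΘ : MeasurableSet Θ)
    (T : ℕ → Type*) [∀ k, MeasurableSpace (T k)] (ν : ∀ k, Measure (T k))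
    (p : ∀ k, T k → ℝ → ℝ)
    (hnonneg : ∀ k t θ, 0 ≤ p k t θ)
    (hdens : ∀ k, ∀ θ ∈ Θ, ∫ t, p k t θ ∂ν k = 1)
    (q : ℝ → ℝ) (hq_cont : ContinuousOn q Θ) (hq_pos : ∀ θ ∈ Θ, 0 < q θ)
    (hq_proper : ∀ k, ∀ t : T k,
      IntegrableOn (fun θ => p k t θ * q θ) Θ ∧ 0 < ∫ θ in Θ, p k t θ * q θ)
    (πs : ℝ → ℝ) (hπs_cont : ContinuousOn πs Θ) (hπs_pos : ∀ θ ∈ Θ, 0 < πs θ)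
    (hπs_proper : ∀ k, ∀ t : T k,
      IntegrableOn (fun θ => p k t θ * πs θ) Θ ∧ 0 < ∫ θ in Θ, p k t θ * πs θ)
    -- posterior consistency of π*
    (hπs_cons : ∀ θ ∈ Θ, ∀ ε > (0 : ℝ), ∀ δ > (0 : ℝ),
      Tendsto
        (fun k =>
          ∫ t in {t : T k |
              δ < |(∫ τ in Θ ∩ Set.Icc (θ - ε) (θ + ε), p k t τ * πs τ) /
                  (∫ τ in Θ, p k t τ * πs τ) - 1|},
            p k t θ ∂ν k)
        atTop (nhds 0))
    (Θ0 : Set ℝ) (hΘ0 : IsCompact Θ0) (hΘ0sub : Θ0 ⊆ Θ)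
    (θ : ℝ) (hθ : θ ∈ interior Θ0) :
    ∀ δ > (0 : ℝ),
      Tendsto
        (fun k =>
          ∫ t in {t : T k |
              δ < |(p k t θ * πs θ / (∫ τ in Θ0, p k t τ * πs τ)) /
                  (p k t θ * q θ / (∫ τ in Θ0, p k t τ * q τ)) - 1|},
            p k t θ ∂ν k)
        atTop (nhds 0) := by
  intro δ hδ
  have hΘ0_nhds : Θ0 ∈ 𝓝 θ := mem_interior_iff_mem_nhds.1 hθ
  have hθΘ : θ ∈ Θ := hΘ0sub (mem_of_mem_nhds hΘ0_nhds)
  set c := q θ / πs θ with hc_def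
  have hc : 0 < c := div_pos (hq_pos θ hθΘ) (hπs_pos θ hθΘ)
  have hw : ContinuousOn (fun τ => q τ / πs τ) Θ :=
    hq_cont.div hπs_cont fun τ hτ => (hπs_pos τ hτ).ne'
  obtain ⟨K, hK⟩ :=
    hΘ0.exists_bound_of_continuousOn ((hw.mono hΘ0sub).sub (continuousOn_const (c := c)))
  have hK0 : 0 ≤ K := (norm_nonneg _).trans (hK θ (mem_of_mem_nhds hΘ0_nhds))
  obtain ⟨δ', hδ'0, hδ'1, hKδ'⟩ := exists_pos_lt_one_and_mul_lt K (by positivity : 0 < c * δ / 2)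
  obtain ⟨ε, hε, hIΘ0, hnear⟩ := exists_Icc_subset_and_abs_sub_le
    ((hw θ hθΘ).continuousAt (mem_of_superset hΘ0_nhds hΘ0sub)) hΘ0_nhds
    (by positivity : 0 < c * δ / 2)
  have hcons := hπs_cons θ hθΘ ε hε δ' hδ'0
  rw [Set.inter_eq_right.2 (hIΘ0.trans hΘ0sub)] at hcons
  refine squeeze_zero (fun k => integral_nonneg fun t => hnonneg k t θ)
    (fun k => setIntegral_le_of_subset_union_zero
      (.of_integral_ne_zero (by rw [hdens k θ hθΘ]; exact one_ne_zero))
      (fun t => hnonneg k t θ) fun t ht => ?_) hcons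
  rw [Set.mem_union, or_iff_not_imp_right]
  intro hpθ
  by_contra hconc
  simp only [Set.mem_ofPred_eq, not_lt] at hpθ hconc ht
  rw [mul_div_div_mul_div_eq hpθ, ← hc_def, div_sub_one hc.ne', abs_div, abs_of_pos hc,
    lt_div_iff₀ hc] at ht
  have hratio := abs_setIntegral_div_setIntegral_sub_le (η := c * δ / 2) hΘ
    hΘ0.isClosed.measurableSet measurableSet_Icc hIΘ0 hΘ0sub (hnonneg k t) hπs_pos
    (hπs_proper k t).1 (hq_proper k t).1 (hπs_proper k t).2 (by positivity) hK0 hnear hK hδ'1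
    hconc
  linarith

/-- Step 2 of the proof of Theorem 7: If `π*` is
posterior-consistent, then at any interior point `θ` of a compact `Θ0` the
ratio of the restricted posteriors from `π*` and from any `p ∈ P_s` converges
to one in `p(·|θ)`-probability. -/
theorem stmt_14
    (Θ : Set ℝ) (hΘ : MeasurableSet Θ)
    (T : ℕ → Type*) [∀ k, MeasurableSpace (T k)] (ν : ∀ k, Measure (T k))
    (p : ∀ k, T k → ℝ → ℝ)
    (hmeas : ∀ k, Measurable (Function.uncurry (p k)))
    (hnonneg : ∀ k t θ, 0 ≤ p k t θ)
    (hdens : ∀ k, ∀ θ ∈ Θ, ∫ t, p k t θ ∂ν k = 1)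
    (q : ℝ → ℝ) (hq_cont : ContinuousOn q Θ) (hq_pos : ∀ θ ∈ Θ, 0 < q θ)
    (hq_proper : ∀ k, ∀ t : T k,
      IntegrableOn (fun θ => p k t θ * q θ) Θ ∧ 0 < ∫ θ in Θ, p k t θ * q θ)
    (πs : ℝ → ℝ) (hπs_cont : ContinuousOn πs Θ) (hπs_pos : ∀ θ ∈ Θ, 0 < πs θ)
    (hπs_proper : ∀ k, ∀ t : T k,
      IntegrableOn (fun θ => p k t θ * πs θ) Θ ∧ 0 < ∫ θ in Θ, p k t θ * πs θ)
    -- posterior consistency of π*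
    (hπs_cons : ∀ θ ∈ Θ, ∀ ε > (0 : ℝ), ∀ δ > (0 : ℝ),
      Tendsto
        (fun k =>
          ∫ t in {t : T k |
              δ < |(∫ τ in Θ ∩ Set.Icc (θ - ε) (θ + ε), p k t τ * πs τ) /
                  (∫ τ in Θ, p k t τ * πs τ) - 1|},
            p k t θ ∂ν k)
        atTop (nhds 0))
    (Θ0 : Set ℝ) (hΘ0 : IsCompact Θ0) (hΘ0sub : Θ0 ⊆ Θ)
    (θ : ℝ) (hθ : θ ∈ interior Θ0) :
    ∀ δ > (0 : ℝ),
      Tendsto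
        (fun k =>
          ∫ t in {t : T k |
              δ < |(p k t θ * πs θ / (∫ τ in Θ0, p k t τ * πs τ)) /
                  (p k t θ * q θ / (∫ τ in Θ0, p k t τ * q τ)) - 1|},
            p k t θ ∂ν k)
        atTop (nhds 0) :=
  stmt_14_general Θ hΘ T ν p hnonneg hdens q hq_cont hq_pos hq_proper πs hπs_cont hπs_pos hπs_proper
    hπs_cons Θ0 hΘ0 hΘ0sub θ hθ
end
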